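/- arXiv:2509.26175 — 7 statements merged into one kernel-verified Lean document; each statement's English description precedes it below -/
import Mathlib

section
/- Let π be a probability density on ℝ proportional to exp(−U(x)), where U : ℝ → ℝ is continuously differentiable and strictly convex with U(0) = 0 and U′(0) = 0, and suppose π has finite variance s² = Var(π) > 0. Then min{U(−s), U(s)} ≤ 2.6. -/
/-!
Suppose `U (±s) > √2`. Since `U` is convex with `U 0 = 0`, it lies below the chord
`x ↦ (U s / s) x` on `[0, s]` and above it on `[s, ∞)`, exactly where `x² - s²` is negative,
resp. positive. Hence, with `r = U s / s`,
`∫₀^∞ (x² - s²) e^{-U} ≤ ∫₀^∞ (x² - s²) e^{-r x} = s³ (2 - U s ²) / U s ³ < 0`,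
and likewise on `(-∞, 0]`. So the second moment of `π` is below `s²`, contradicting
`s² = Var π ≤ E[X²]`.
-/

open MeasureTheory

section

open Set Real Nat

lemma integral_pow_mul_exp_neg_mul_Ioi (n : ℕ) {r : ℝ} (hr : 0 < r) :
    ∫ x in Ioi (0 : ℝ), x ^ n * exp (-(r * x)) = n ! / r ^ (n + 1) := by
  have h := integral_rpow_mul_exp_neg_mul_Ioi (by positivity : (0 : ℝ) < n + 1) hr
  simp_rw [add_sub_cancel_right, rpow_natCast] at h
  rw [h, Gamma_nat_eq_factorial, ← Nat.cast_add_one, rpow_natCast, one_div, inv_pow]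
  ring

lemma integrableOn_pow_mul_exp_neg_mul_Ioi (n : ℕ) {r : ℝ} (hr : 0 < r) :
    IntegrableOn (fun x : ℝ ↦ x ^ n * exp (-(r * x))) (Ioi 0) :=
  .of_integral_ne_zero (by rw [integral_pow_mul_exp_neg_mul_Ioi n hr]; positivity)

namespace ConvexOn

variable {U : ℝ → ℝ}

lemma div_le_div_of_le (hU : ConvexOn ℝ univ U) (hU0 : U 0 = 0) {x y : ℝ} (hx : 0 < x)
    (hxy : x ≤ y) : U x / x ≤ U y / y := by
  simpa [hU0] using hU.secant_mono (mem_univ 0) (mem_univ x) (mem_univ y) hx.ne'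
    (hx.trans_le hxy).ne' hxy

lemma sq_sub_sq_mul_exp_neg_le (hU : ConvexOn ℝ univ U) (hU0 : U 0 = 0) {s x : ℝ}
    (hs : 0 < s) (hx : 0 ≤ x) :
    (x ^ 2 - s ^ 2) * exp (-U x) ≤ (x ^ 2 - s ^ 2) * exp (-(U s / s * x)) := by
  rcases le_total x s with hxs | hsx
  · have hchord : U x ≤ U s / s * x := by
      rcases hx.eq_or_lt with rfl | hx
      · simp [hU0]
      · rw [← div_le_iff₀ hx]
        exact hU.div_le_div_of_le hU0 hx hxs
    exact mul_le_mul_of_nonpos_left (exp_le_exp.2 (by linarith)) (by nlinarith)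
  · have hchord : U s / s * x ≤ U x := by
      rw [← le_div_iff₀ (hs.trans_le hsx)]
      exact hU.div_le_div_of_le hU0 hs hsx
    exact mul_le_mul_of_nonneg_left (exp_le_exp.2 (by linarith)) (by nlinarith)

lemma setIntegral_Ioi_sq_sub_sq_mul_exp_neg_lt_zero (hU : ConvexOn ℝ univ U) (hU0 : U 0 = 0)
    {s : ℝ} (hs : 0 < s) (hUs : √2 < U s)
    (hint : IntegrableOn (fun x ↦ (x ^ 2 - s ^ 2) * exp (-U x)) (Ioi 0)) :
    ∫ x in Ioi 0, (x ^ 2 - s ^ 2) * exp (-U x) < 0 := by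
  have hUs_pos : 0 < U s := (sqrt_nonneg 2).trans_lt hUs
  have hr : 0 < U s / s := div_pos hUs_pos hs
  have hsq : 2 < U s ^ 2 := by
    simpa [sq_sqrt] using pow_lt_pow_left₀ hUs (sqrt_nonneg 2) two_ne_zero
  have hexp_int (n : ℕ) := integrableOn_pow_mul_exp_neg_mul_Ioi n hr
  calc ∫ x in Ioi 0, (x ^ 2 - s ^ 2) * exp (-U x)
      ≤ ∫ x in Ioi 0,
          (x ^ 2 * exp (-(U s / s * x)) - s ^ 2 * (x ^ 0 * exp (-(U s / s * x)))) :=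
        setIntegral_mono_on hint ((hexp_int 2).sub ((hexp_int 0).const_mul _)) measurableSet_Ioi
          fun x hx ↦ (hU.sq_sub_sq_mul_exp_neg_le hU0 hs hx.le).trans_eq (by ring)
    _ = s ^ 3 * (2 - U s ^ 2) / U s ^ 3 := by
        rw [integral_sub (hexp_int 2) ((hexp_int 0).const_mul _), integral_const_mul,
          integral_pow_mul_exp_neg_mul_Ioi 2 hr, integral_pow_mul_exp_neg_mul_Ioi 0 hr]
        norm_num [Nat.factorial]
        field_simp
    _ < 0 := div_neg_of_neg_of_pos (mul_neg_of_pos_of_neg (by positivity) (by linarith))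
        (by positivity)

lemma min_le_sqrt_two (hU : ConvexOn ℝ univ U) (hU0 : U 0 = 0) {s : ℝ} (hs : 0 < s)
    (hint : Integrable (fun x ↦ exp (-U x))) (hint₂ : Integrable (fun x ↦ x ^ 2 * exp (-U x)))
    (hmoment : s ^ 2 * ∫ x, exp (-U x) ≤ ∫ x, x ^ 2 * exp (-U x)) :
    min (U (-s)) (U s) ≤ √2 := by
  by_contra! h
  rw [lt_min_iff] at h
  have hf : Integrable (fun x ↦ (x ^ 2 - s ^ 2) * exp (-U x)) := by
    simp only [sub_mul]
    exact hint₂.sub (hint.const_mul _)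
  have hright := hU.setIntegral_Ioi_sq_sub_sq_mul_exp_neg_lt_zero hU0 hs h.2 hf.integrableOn
  have hleft : ∫ x in Iic 0, (x ^ 2 - s ^ 2) * exp (-U x) < 0 := by
    have hU_neg : ConvexOn ℝ univ (fun x ↦ U (-x)) := hU.comp_linearMap (-LinearMap.id)
    rw [← neg_zero, ← integral_comp_neg_Ioi]
    simpa using hU_neg.setIntegral_Ioi_sq_sub_sq_mul_exp_neg_lt_zero (by simpa using hU0) hs h.1
      (by simpa using hf.comp_neg.integrableOn)
  have htotal : ∫ x, (x ^ 2 - s ^ 2) * exp (-U x) < 0 := by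
    rw [← intervalIntegral.integral_Iic_add_Ioi hf.integrableOn hf.integrableOn]
    linarith
  simp only [sub_mul] at htotal
  rw [integral_sub hint₂ (hint.const_mul _), integral_const_mul] at htotal
  linarith

end ConvexOn

end

theorem potential_at_one_sd_le_general
    (U : ℝ → ℝ)
    (hU_conv : StrictConvexOn ℝ Set.univ U)
    (hU0 : U 0 = 0)
    (hU_int : Integrable (fun x => Real.exp (-U x)))
    (π : ℝ → ℝ)
    (hπ : ∀ x, π x = Real.exp (-U x) / ∫ z, Real.exp (-U z))
    -- finite positive variance s² = Var(π)
    (hm2 : Integrable (fun x => x ^ 2 * π x))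
    (s : ℝ) (hs_pos : 0 < s)
    (hs : s ^ 2 = (∫ x, x ^ 2 * π x) - (∫ x, x * π x) ^ 2) :
    min (U (-s)) (U s) ≤ 2.6 := by
  have hZ : 0 < ∫ z, Real.exp (-U z) := integral_exp_pos hU_int
  have hπ_moment :
      ∫ x, x ^ 2 * π x = (∫ x, x ^ 2 * Real.exp (-U x)) / ∫ z, Real.exp (-U z) := by
    simp_rw [hπ, mul_div_assoc']
    exact integral_div _ _
  have hint₂ : Integrable (fun x => x ^ 2 * Real.exp (-U x)) := by
    refine (hm2.mul_const (∫ z, Real.exp (-U z))).congr (.of_forall fun x => ?_)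
    simp only [hπ]
    field_simp
  have hvar : s ^ 2 ≤ ∫ x, x ^ 2 * π x := by linarith [sq_nonneg (∫ x, x * π x)]
  rw [hπ_moment, le_div_iff₀ hZ] at hvar
  calc min (U (-s)) (U s) ≤ √2 :=
        hU_conv.convexOn.min_le_sqrt_two hU0 hs_pos hU_int hint₂ hvar
    _ ≤ 2.6 := Real.sqrt_le_iff.mpr ⟨by norm_num, by norm_num⟩

/-- **Potential growth at one standard deviation (Lemma 3.2).**
Let `π ∝ exp(-U)` be a probability density on `ℝ` with `U` continuously differentiable
and strictly convex, normalized so that `U(0) = U'(0) = 0`, and suppose `π` has finite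
positive variance `s² = Var(π)`.  Then `min{U(-s), U(s)} ≤ 2.6`. -/
theorem potential_at_one_sd_le
    (U : ℝ → ℝ)
    (hU_smooth : ContDiff ℝ 1 U)
    (hU_conv : StrictConvexOn ℝ Set.univ U)
    (hU0 : U 0 = 0)
    (hU'0 : deriv U 0 = 0)
    (hU_int : Integrable (fun x => Real.exp (-U x)))
    (π : ℝ → ℝ)
    (hπ : ∀ x, π x = Real.exp (-U x) / ∫ z, Real.exp (-U z))
    -- finite positive variance s² = Var(π)
    (hm1 : Integrable (fun x => x * π x))
    (hm2 : Integrable (fun x => x ^ 2 * π x))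
    (s : ℝ) (hs_pos : 0 < s)
    (hs : s ^ 2 = (∫ x, x ^ 2 * π x) - (∫ x, x * π x) ^ 2) :
    min (U (-s)) (U s) ≤ 2.6 :=
  potential_at_one_sd_le_general U hU_conv hU0 hU_int π hπ hm2 s hs_pos hs
end

section
/- Let P be a Markov transition kernel on ℝ^d with stationary distribution π (a Borel probability measure). Suppose: (1) π satisfies a Cheeger isoperimetric inequality with constant Ch(π) > 0, i.e. for all Borel sets A, π⁺(A) ≥ (1/Ch(π))·min{π(A), π(A^c)}; and (2) there exist δ > 0 and 0 < h < 1 such that for all x, y ∈ ℝ^d with ‖x − y‖ ≤ δ, the total variation distance satisfies d_TV(P(x,·), P(y,·)) ≤ 1 − h. Then the conductance of P satisfies Φ(P) ≥ min{ h/4 , δ·h/(8·Ch(π)) }. -/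
/-!
Let `A₁ ⊆ A` and `A₂ ⊆ Aᶜ` be the points from which the chain crosses to the other side with
probability less than `h/2`. The overlap condition puts `A₁` and `A₂` at distance more than `δ`.
If `A₁` carries at most half of `π A` (or `A₂` at most half of `π Aᶜ`), the remaining points of
that side already push a flow of `h/4 · min (π A) (π Aᶜ)` across; by stationarity the flow out of
`A` equals the flow out of `Aᶜ`. Otherwise both carry mass at least `min/2`, and integrating the
Cheeger inequality along the thickenings of `A₁` up to radius `δ` (which stay away from `A₂`)
shows that the rest of the space has mass at least `δ · min / (2 Ch)`; each of its points
contributes `h/2` to one of the two equal flows.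
-/

open MeasureTheory Metric Filter Set Topology

theorem Monotone.mul_sub_le_sub_of_lt_slope {g : ℝ → ℝ} (hg : Monotone g) {a b c : ℝ}
    (hab : a ≤ b) (H : ∀ s ∈ Ico a b, ∀ᶠ r in 𝓝[>] 0, c < (g (s + r) - g s) / r) :
    c * (b - a) ≤ g b - g a := by
  rcases le_or_gt c 0 with hc | hc
  · nlinarith [hg hab]
  -- `T = sSup S` lies in `S` by monotonicity of `g`, and `T < b` would contradict the slope at `T`.
  set S := {t ∈ Icc a b | c * (t - a) ≤ g t - g a}
  have haS : a ∈ S := ⟨⟨le_rfl, hab⟩, by simp⟩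
  have hbdd : BddAbove S := ⟨b, fun t ht => ht.1.2⟩
  set T := sSup S
  have hTS : T ∈ S := by
    refine ⟨⟨le_csSup hbdd haS, csSup_le ⟨a, haS⟩ fun t ht => ht.1.2⟩, ?_⟩
    have : T ≤ a + (g T - g a) / c := csSup_le ⟨a, haS⟩ fun t ht => by
      have := hg (le_csSup hbdd ht)
      rw [← sub_le_iff_le_add', le_div_iff₀ hc]
      linarith [ht.2]
    rw [← sub_le_iff_le_add', le_div_iff₀ hc] at this
    linarith
  have hTb : T = b := by
    by_contra hTb
    have hTb : T < b := lt_of_le_of_ne hTS.1.2 hTb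
    obtain ⟨r, hr, hr0, hrb⟩ := ((H T ⟨hTS.1.1, hTb⟩).and
      (Ioo_mem_nhdsGT (sub_pos.2 hTb))).exists
    rw [lt_div_iff₀ hr0] at hr
    have : T + r ∈ S := ⟨⟨by linarith [hTS.1.1], by linarith⟩, by linarith [hTS.2]⟩
    linarith [le_csSup hbdd this]
  simpa [hTb] using hTS.2

theorem Monotone.mul_sub_le_sub_of_le_liminf_slope {g : ℝ → ℝ} (hg : Monotone g) {a b c : ℝ}
    (hab : a ≤ b) (H : ∀ s ∈ Ico a b, ∀ c' < c, ∀ᶠ r in 𝓝[>] 0, c' < (g (s + r) - g s) / r) :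
    c * (b - a) ≤ g b - g a :=
  _root_.le_of_tendsto (((continuous_mul_const (b - a)).tendsto c).mono_left nhdsWithin_le_nhds)
    (eventually_nhdsWithin_of_forall fun c' hc' =>
      hg.mul_sub_le_sub_of_lt_slope hab fun s hs => H s hs c' hc' :
      ∀ᶠ c' in 𝓝[<] c, c' * (b - a) ≤ g b - g a)

section Isoperimetry

variable {α : Type*} [PseudoMetricSpace α]

theorem thickening_thickening_union_subset {s : ℝ} (hs : 0 ≤ s) (r : ℝ) (B : Set α) :
    thickening r (thickening s B ∪ B) ⊆ thickening (s + r) B ∪ B := by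
  rw [thickening_union, add_comm]
  exact subset_union_of_subset_left (union_subset (thickening_thickening_subset r s B)
    (thickening_mono (by linarith) B)) B

theorem thickening_union_disjoint_of_lt_dist {δ s : ℝ} (hδ : 0 ≤ δ) (hs : s ≤ δ) {B D : Set α}
    (hsep : ∀ x ∈ B, ∀ y ∈ D, δ < dist x y) : Disjoint (thickening s B ∪ B) D := by
  refine Set.disjoint_left.2 fun y hy hyD => ?_
  rcases hy with hy | hy
  · obtain ⟨x, hx, hxy⟩ := mem_thickening_iff.1 hy
    linarith [hsep x hx y hyD, dist_comm x y]
  · linarith [hsep y hy y hyD, dist_self y]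

variable [MeasurableSpace α] {μ : Measure α}

noncomputable def boundaryMeasure (μ : Measure α) (A : Set α) : ℝ :=
  liminf (fun r => (μ.real (thickening r A) - μ.real A) / r) (𝓝[>] 0)

theorem eventually_lt_slope_of_lt_boundaryMeasure [IsFiniteMeasure μ] {A : Set α} {c : ℝ}
    (hc : c < boundaryMeasure μ A) :
    ∀ᶠ r in 𝓝[>] 0, c < (μ.real (thickening r A) - μ.real A) / r := by
  refine eventually_lt_of_lt_liminf hc (isBoundedUnder_of_eventually_ge (a := 0) ?_)
  filter_upwards [self_mem_nhdsWithin] with r (hr : 0 < r)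
  exact div_nonneg (sub_nonneg.2 (measureReal_mono (self_subset_thickening hr A))) hr.le

theorem mul_mul_le_one_sub_measureReal_sub_of_lt_dist [OpensMeasurableSpace α]
    [IsProbabilityMeasure μ] {κ m δ : ℝ} (hκ : 0 ≤ κ)
    (hiso : ∀ C, MeasurableSet C → κ * min (μ.real C) (μ.real Cᶜ) ≤ boundaryMeasure μ C)
    (hδ : 0 ≤ δ) {B D : Set α} (hB : MeasurableSet B) (hD : MeasurableSet D)
    (hmB : m ≤ μ.real B) (hmD : m ≤ μ.real D) (hsep : ∀ x ∈ B, ∀ y ∈ D, δ < dist x y) :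
    κ * m * δ ≤ 1 - μ.real B - μ.real D := by
  -- the union with `B` is needed at `s = 0`, where `thickening 0 B = ∅`
  set g := fun s => μ.real (thickening s B ∪ B)
  have hg : Monotone g := fun s t hst =>
    measureReal_mono (union_subset_union_left _ (thickening_mono hst B))
  have hslope : ∀ s ∈ Ico 0 δ, ∀ c < κ * m, ∀ᶠ r in 𝓝[>] 0, c < (g (s + r) - g s) / r := by
    intro s hs c hc
    have hdisj := thickening_union_disjoint_of_lt_dist hδ hs.2.le hsep
    have hmin : κ * m ≤ boundaryMeasure μ (thickening s B ∪ B) :=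
      (mul_le_mul_of_nonneg_left (le_min (hmB.trans (measureReal_mono subset_union_right))
        (hmD.trans (measureReal_mono hdisj.symm.subset_compl_right))) hκ).trans
        (hiso _ (isOpen_thickening.measurableSet.union hB))
    filter_upwards [eventually_lt_slope_of_lt_boundaryMeasure (hc.trans_le hmin),
      self_mem_nhdsWithin] with r hr (hr0 : 0 < r)
    exact hr.trans_le (div_le_div_of_nonneg_right (sub_le_sub_right
      (measureReal_mono (thickening_thickening_union_subset hs.1 r B)) _) hr0.le)
  have hgrowth := hg.mul_sub_le_sub_of_le_liminf_slope hδ hslope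
  have hg0 : g 0 = μ.real B := by simp [g, thickening_of_nonpos le_rfl]
  have hgδ : g δ ≤ 1 - μ.real D := probReal_compl_eq_one_sub (μ := μ) hD ▸
    measureReal_mono (thickening_union_disjoint_of_lt_dist hδ le_rfl hsep).subset_compl_right
  rw [sub_zero, hg0] at hgrowth
  linarith

end Isoperimetry

section MarkovKernel

variable {α : Type*} [MeasurableSpace α] {π : Measure α} {P : α → Measure α} {A : Set α}

def lowExitSet (P : α → Measure α) (A : Set α) (t : ℝ) : Set α :=
  {x ∈ A | (P x Aᶜ).toReal < t}

theorem measurableSet_lowExitSet (hA : MeasurableSet A) (hP : Measurable fun x => P x Aᶜ)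
    (t : ℝ) : MeasurableSet (lowExitSet P A t) :=
  hA.inter (measurableSet_lt hP.ennreal_toReal measurable_const)

theorem setLIntegral_compl_eq_of_stationary [∀ x, IsProbabilityMeasure (P x)]
    [IsFiniteMeasure π] (hA : MeasurableSet A) (hPA : Measurable fun x => P x A)
    (hstat : ∫⁻ x, P x Aᶜ ∂π = π Aᶜ) :
    ∫⁻ x in A, P x Aᶜ ∂π = ∫⁻ x in Aᶜ, P x A ∂π := by
  have hsplit : ∫⁻ x in A, P x Aᶜ ∂π + ∫⁻ x in Aᶜ, P x Aᶜ ∂π = π Aᶜ := by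
    rw [lintegral_add_compl _ hA, hstat]
  refine (ENNReal.add_left_inj (ENNReal.add_ne_top.1 (hsplit ▸ measure_ne_top π Aᶜ)).2).1 ?_
  calc _ = π Aᶜ := hsplit
    _ = ∫⁻ x in Aᶜ, (P x A + P x Aᶜ) ∂π := by simp [measure_add_measure_compl hA]
    _ = _ := lintegral_add_left hPA _

theorem setIntegral_toReal_compl_eq_of_stationary [∀ x, IsProbabilityMeasure (P x)]
    [IsFiniteMeasure π] (hA : MeasurableSet A) (hPA : Measurable fun x => P x A)
    (hPAc : Measurable fun x => P x Aᶜ) (hstat : ∫⁻ x, P x Aᶜ ∂π = π Aᶜ) :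
    ∫ x in A, (P x Aᶜ).toReal ∂π = ∫ x in Aᶜ, (P x A).toReal ∂π := by
  rw [integral_toReal hPAc.aemeasurable (ae_of_all _ fun _ => measure_lt_top _ _),
    integral_toReal hPA.aemeasurable (ae_of_all _ fun _ => measure_lt_top _ _),
    setLIntegral_compl_eq_of_stationary hA hPA hstat]

theorem mul_sub_measureReal_lowExitSet_le [∀ x, IsProbabilityMeasure (P x)]
    [IsFiniteMeasure π] (hA : MeasurableSet A) (hP : Measurable fun x => P x Aᶜ) (t : ℝ) :
    t * (π.real A - π.real (lowExitSet P A t)) ≤ ∫ x in A, (P x Aᶜ).toReal ∂π := by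
  rw [← measureReal_sdiff (show lowExitSet P A t ⊆ A from sep_subset _ _)
    (measurableSet_lowExitSet hA hP t)]
  have hint : Integrable (fun x => (P x Aᶜ).toReal) π :=
    .of_bound hP.ennreal_toReal.aestronglyMeasurable 1 (ae_of_all _ fun _ => by
      rw [Real.norm_eq_abs, abs_of_nonneg ENNReal.toReal_nonneg]
      exact measureReal_le_one)
  calc t * π.real (A \ lowExitSet P A t)
      ≤ ∫ x in A \ lowExitSet P A t, (P x Aᶜ).toReal ∂π :=
        setIntegral_ge_of_const_le_real (hA.diff (measurableSet_lowExitSet hA hP t))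
          (measure_ne_top _ _) (fun x hx => not_lt.1 fun hlt => hx.2 ⟨hx.1, hlt⟩)
          hint.integrableOn
    _ ≤ ∫ x in A, (P x Aᶜ).toReal ∂π :=
        setIntegral_mono_set hint.integrableOn (ae_of_all _ fun _ => ENNReal.toReal_nonneg)
          sdiff_subset.eventuallyLE

theorem lt_dist_of_mem_lowExitSet [PseudoMetricSpace α] [∀ x, IsProbabilityMeasure (P x)]
    (hA : MeasurableSet A) {δ h : ℝ}
    (hov : ∀ x y, dist x y ≤ δ → |(P x A).toReal - (P y A).toReal| ≤ 1 - h) {x y : α}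
    (hx : x ∈ lowExitSet P A (h / 2)) (hy : y ∈ lowExitSet P Aᶜ (h / 2)) : δ < dist x y := by
  have hxA : (P x Aᶜ).toReal = 1 - (P x A).toReal := probReal_compl_eq_one_sub hA
  have hyA : (P y A).toReal < h / 2 := by simpa using hy.2
  by_contra! hxy
  linarith [(abs_le.1 (hov x y hxy)).2, hx.2]

theorem min_mul_min_le_setIntegral_of_isoperimetric [PseudoMetricSpace α]
    [OpensMeasurableSpace α] [IsProbabilityMeasure π] [∀ x, IsProbabilityMeasure (P x)]
    (hA : MeasurableSet A) (hPA : Measurable fun x => P x A)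
    (hPAc : Measurable fun x => P x Aᶜ) (hstat : ∫⁻ x, P x Aᶜ ∂π = π Aᶜ) {κ δ h : ℝ}
    (hκ : 0 ≤ κ)
    (hiso : ∀ C, MeasurableSet C → κ * min (π.real C) (π.real Cᶜ) ≤ boundaryMeasure π C)
    (hδ : 0 ≤ δ) (hh : 0 ≤ h)
    (hov : ∀ x y, dist x y ≤ δ → |(P x A).toReal - (P y A).toReal| ≤ 1 - h) :
    min (h / 4) (κ * δ * h / 8) * min (π.real A) (π.real Aᶜ) ≤
      ∫ x in A, (P x Aᶜ).toReal ∂π := by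
  have hPAcc : Measurable fun x => P x Aᶜᶜ := by rwa [compl_compl]
  have hflow₁ := mul_sub_measureReal_lowExitSet_le (π := π) hA hPAc (h / 2)
  have hflow₂ := mul_sub_measureReal_lowExitSet_le (π := π) hA.compl hPAcc (h / 2)
  rw [compl_compl, ← setIntegral_toReal_compl_eq_of_stationary hA hPA hPAc hstat] at hflow₂
  have hA_add : π.real A + π.real Aᶜ = 1 := by simp [measureReal_add_measureReal_compl hA]
  set m := min (π.real A) (π.real Aᶜ)
  have hmA : m ≤ π.real A := min_le_left _ _
  have hmAc : m ≤ π.real Aᶜ := min_le_right _ _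
  have hm : 0 ≤ m := le_min measureReal_nonneg measureReal_nonneg
  have hM : min (h / 4) (κ * δ * h / 8) * m ≤ h / 4 * m :=
    mul_le_mul_of_nonneg_right (min_le_left _ _) hm
  by_cases hsmall₁ : π.real (lowExitSet P A (h / 2)) ≤ π.real A / 2
  · linarith [mul_le_mul_of_nonneg_left hsmall₁ hh, mul_le_mul_of_nonneg_left hmA hh]
  by_cases hsmall₂ : π.real (lowExitSet P Aᶜ (h / 2)) ≤ π.real Aᶜ / 2
  · linarith [mul_le_mul_of_nonneg_left hsmall₂ hh, mul_le_mul_of_nonneg_left hmAc hh]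
  have hgap := mul_mul_le_one_sub_measureReal_sub_of_lt_dist (m := m / 2) hκ hiso hδ
    (measurableSet_lowExitSet hA hPAc _) (measurableSet_lowExitSet hA.compl hPAcc _)
    (by linarith) (by linarith) fun x hx y hy => lt_dist_of_mem_lowExitSet hA hov hx hy
  have hM' : min (h / 4) (κ * δ * h / 8) * m ≤ h / 4 * (κ * (m / 2) * δ) := by
    linarith [mul_le_mul_of_nonneg_right (min_le_right (h / 4) (κ * δ * h / 8)) hm]
  nlinarith [mul_le_mul_of_nonneg_left hgap hh]

end MarkovKernel

theorem conductance_of_isoperimetry_and_overlap_general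
    (d : ℕ)
    (π : Measure (EuclideanSpace ℝ (Fin d))) [IsProbabilityMeasure π]
    -- the Markov kernel
    (P : EuclideanSpace ℝ (Fin d) → Measure (EuclideanSpace ℝ (Fin d)))
    (hP_prob : ∀ x, IsProbabilityMeasure (P x))
    (hP_meas : ∀ A : Set (EuclideanSpace ℝ (Fin d)), MeasurableSet A →
      Measurable (fun x => P x A))
    -- stationarity of π for P
    (hP_stat : ∀ A : Set (EuclideanSpace ℝ (Fin d)), MeasurableSet A →
      ∫⁻ x, P x A ∂π = π A)
    -- the boundary measure π⁺(A) (liminf as r → 0⁺ of (π(Aʳ) − π(A))/r)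
    (bm : Set (EuclideanSpace ℝ (Fin d)) → ℝ)
    (hbm : ∀ A, bm A = Filter.liminf
      (fun r : ℝ => ((π (Metric.thickening r A)).toReal - (π A).toReal) / r)
      (nhdsWithin 0 (Set.Ioi 0)))
    -- (1) Cheeger isoperimetric inequality with constant Ch > 0
    (Ch : ℝ) (hCh_pos : 0 < Ch)
    (hiso : ∀ A : Set (EuclideanSpace ℝ (Fin d)), MeasurableSet A →
      (1 / Ch) * min (π A).toReal (π Aᶜ).toReal ≤ bm A)
    -- (2) one-step overlap: d_TV(P(x,·), P(y,·)) ≤ 1 − h whenever ‖x − y‖ ≤ δ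
    (δ : ℝ) (hδ_pos : 0 < δ)
    (h : ℝ) (hh_pos : 0 < h)
    (hoverlap : ∀ x y : EuclideanSpace ℝ (Fin d), ‖x - y‖ ≤ δ →
      ∀ A : Set (EuclideanSpace ℝ (Fin d)), MeasurableSet A →
        |(P x A).toReal - (P y A).toReal| ≤ 1 - h) :
    -- conclusion: Φ(P) ≥ min{ h/4 , δh/(8 Ch) }
    ∀ A : Set (EuclideanSpace ℝ (Fin d)), MeasurableSet A → 0 < π A → π A < 1 →
      min (h / 4) (δ * h / (8 * Ch)) * min (π A).toReal (π Aᶜ).toReal ≤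
        ∫ x in A, (P x Aᶜ).toReal ∂π := by
  intro A hA _ _
  have := hP_prob
  have hbound := min_mul_min_le_setIntegral_of_isoperimetric hA (hP_meas A hA)
    (hP_meas Aᶜ hA.compl) (hP_stat _ hA.compl) (by positivity)
    (fun C hC => hbm C ▸ hiso C hC) hδ_pos.le hh_pos.le
    fun x y hxy => hoverlap x y (by rwa [← dist_eq_norm]) A hA
  rwa [show δ * h / (8 * Ch) = 1 / Ch * δ * h / 8 by ring]

/-- **Conductance from isoperimetry and one-step overlap (Lemma 2.2).**
Let `P` be a Markov transition kernel on `ℝ^d` with stationary distribution `π`.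
If (1) `π` satisfies a Cheeger isoperimetric inequality with constant `Ch > 0`
(`π⁺(A) ≥ (1/Ch)·min{π(A), π(Aᶜ)}` for every Borel `A`, where `π⁺` is the boundary
measure defined via liminf of thickenings), and (2) there are `δ > 0`, `0 < h < 1`
such that `d_TV(P(x,·), P(y,·)) ≤ 1 - h` whenever `‖x - y‖ ≤ δ`, then the conductance
satisfies `Φ(P) ≥ min{ h/4 , δh/(8 Ch) }`. -/
theorem conductance_of_isoperimetry_and_overlap
    (d : ℕ)
    (π : Measure (EuclideanSpace ℝ (Fin d))) [IsProbabilityMeasure π]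
    -- the Markov kernel
    (P : EuclideanSpace ℝ (Fin d) → Measure (EuclideanSpace ℝ (Fin d)))
    (hP_prob : ∀ x, IsProbabilityMeasure (P x))
    (hP_meas : ∀ A : Set (EuclideanSpace ℝ (Fin d)), MeasurableSet A →
      Measurable (fun x => P x A))
    -- stationarity of π for P
    (hP_stat : ∀ A : Set (EuclideanSpace ℝ (Fin d)), MeasurableSet A →
      ∫⁻ x, P x A ∂π = π A)
    -- the boundary measure π⁺(A) (liminf as r → 0⁺ of (π(Aʳ) − π(A))/r)
    (bm : Set (EuclideanSpace ℝ (Fin d)) → ℝ)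
    (hbm : ∀ A, bm A = Filter.liminf
      (fun r : ℝ => ((π (Metric.thickening r A)).toReal - (π A).toReal) / r)
      (nhdsWithin 0 (Set.Ioi 0)))
    -- (1) Cheeger isoperimetric inequality with constant Ch > 0
    (Ch : ℝ) (hCh_pos : 0 < Ch)
    (hiso : ∀ A : Set (EuclideanSpace ℝ (Fin d)), MeasurableSet A →
      (1 / Ch) * min (π A).toReal (π Aᶜ).toReal ≤ bm A)
    -- (2) one-step overlap: d_TV(P(x,·), P(y,·)) ≤ 1 − h whenever ‖x − y‖ ≤ δ
    (δ : ℝ) (hδ_pos : 0 < δ)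
    (h : ℝ) (hh_pos : 0 < h) (hh_lt : h < 1)
    (hoverlap : ∀ x y : EuclideanSpace ℝ (Fin d), ‖x - y‖ ≤ δ →
      ∀ A : Set (EuclideanSpace ℝ (Fin d)), MeasurableSet A →
        |(P x A).toReal - (P y A).toReal| ≤ 1 - h) :
    -- conclusion: Φ(P) ≥ min{ h/4 , δh/(8 Ch) }
    ∀ A : Set (EuclideanSpace ℝ (Fin d)), MeasurableSet A → 0 < π A → π A < 1 →
      min (h / 4) (δ * h / (8 * Ch)) * min (π A).toReal (π Aᶜ).toReal ≤
        ∫ x in A, (P x Aᶜ).toReal ∂π :=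
  conductance_of_isoperimetry_and_overlap_general d π P hP_prob hP_meas hP_stat bm hbm Ch hCh_pos
    hiso δ hδ_pos h hh_pos hoverlap
end

section
/- Let π be a probability density on ℝ^d and let P be the Random Walk Metropolis kernel for π with Gaussian proposal N(x, σ²I_d), and let α₀ = inf_{x∈ℝ^d} α(x) > 0 be the infimum of the acceptance rate. Then for all x, y ∈ ℝ^d with ‖x − y‖ ≤ α₀·σ, the total variation distance satisfies d_TV(P(x,·), P(y,·)) ≤ 1 − α₀/2. -/
/-!
Write `p x z = min 1 (π z / π x) * φ (z - x)` for the density of accepted moves from `x`, so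
that `P x A = ∫_A p x + (1 - α x) 1_A(x)`. Both `P x` and `P y` dominate the common part
`min (p x) (p y)`, hence `|P x A - P y A| ≤ 1 - ∫ min (p x) (p y)`. If `π y ≤ π x`, the
acceptance probability from `x` is pointwise at most the one from `y`, so the common part has
mass at least `α x - d_TV(N(x, σ²I), N(y, σ²I)) ≥ α₀ - ‖x - y‖ / (σ √(2π)) ≥ α₀ / 2`.
The total variation between the two Gaussians is computed by rotating `x - y` onto a coordinate
axis: the other coordinates factor out and integrate to one, and in the remaining coordinate it
is the Gaussian mass of an interval of length `‖x - y‖`, at most `‖x - y‖` times the peak density.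
-/

open MeasureTheory

section Gaussian

open ProbabilityTheory Real Set Module
open scoped NNReal

lemma gaussianPDFReal_le (μ : ℝ) (v : ℝ≥0) (x : ℝ) : gaussianPDFReal μ v x ≤ (√(2 * π * v))⁻¹ := by
  rw [gaussianPDFReal]
  refine mul_le_of_le_one_right (by positivity) (exp_le_one_iff.2 ?_)
  rw [neg_div]
  exact neg_nonpos.2 (by positivity)

lemma max_gaussianPDFReal_sub_eq_indicator (v : ℝ≥0) {a b : ℝ} (hba : b ≤ a) (t : ℝ) :
    max (gaussianPDFReal a v t - gaussianPDFReal b v t) 0 =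
      (Ioi ((a + b) / 2)).indicator (fun t => gaussianPDFReal a v t - gaussianPDFReal b v t) t := by
  have hmono : ∀ a b, (t - a) ^ 2 ≤ (t - b) ^ 2 →
      gaussianPDFReal b v t ≤ gaussianPDFReal a v t := by
    intro a b h
    simp only [gaussianPDFReal]
    gcongr
  by_cases ht : t ∈ Ioi ((a + b) / 2)
  · rw [indicator_of_mem ht, max_eq_left]
    rw [mem_Ioi] at ht
    exact sub_nonneg.2 (hmono a b (by nlinarith))
  · rw [indicator_of_notMem ht, max_eq_right]
    rw [mem_Ioi, not_lt] at ht
    exact sub_nonpos.2 (hmono b a (by nlinarith))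

lemma integral_max_gaussianPDFReal_sub_le (v : ℝ≥0) {a b : ℝ} (hba : b ≤ a) :
    ∫ t, max (gaussianPDFReal a v t - gaussianPDFReal b v t) 0 ≤ (a - b) * (√(2 * π * v))⁻¹ := by
  set m := (a + b) / 2
  have hshift : ∀ c,
      ∫ t in Ioi m, gaussianPDFReal c v t = ∫ t in Ioi (m - c), gaussianPDFReal 0 v t := by
    intro c
    rw [← preimage_add_const_Ioi, ← (measurePreserving_add_right volume c).setIntegral_preimage_emb
      (measurableEmbedding_addRight c)]
    simp_rw [gaussianPDFReal_add, sub_self]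
  have hint := integrable_gaussianPDFReal 0 v
  calc ∫ t, max (gaussianPDFReal a v t - gaussianPDFReal b v t) 0
      = ∫ t in Ioi m, (gaussianPDFReal a v t - gaussianPDFReal b v t) := by
        simp_rw [max_gaussianPDFReal_sub_eq_indicator v hba]
        exact integral_indicator measurableSet_Ioi
    _ = (∫ t in Ioi (m - a), gaussianPDFReal 0 v t) -
          ∫ t in Ioi (m - b), gaussianPDFReal 0 v t := by
        rw [integral_sub (integrable_gaussianPDFReal a v).integrableOn
          (integrable_gaussianPDFReal b v).integrableOn, hshift, hshift]
    _ = ∫ t in Ioc (m - a) (m - b), gaussianPDFReal 0 v t := by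
        rw [← Ioc_union_Ioi_eq_Ioi (by linarith : m - a ≤ m - b), setIntegral_union
          (Ioc_disjoint_Ioi le_rfl) measurableSet_Ioi hint.integrableOn hint.integrableOn]
        ring
    _ ≤ ∫ t in Ioc (m - a) (m - b), (√(2 * π * v))⁻¹ :=
        setIntegral_mono_on hint.integrableOn (integrableOn_const (by simp)) measurableSet_Ioc
          fun t _ => gaussianPDFReal_le 0 v t
    _ = (a - b) * (√(2 * π * v))⁻¹ := by
        rw [setIntegral_const, smul_eq_mul, measureReal_def, Real.volume_Ioc,
          ENNReal.toReal_ofReal (by linarith)]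
        ring_nf

lemma integral_max_prod_sub_prod_of_ne {ι : Type*} [Fintype ι] [DecidableEq ι] {f g : ι → ℝ → ℝ}
    (hf : ∀ i t, 0 ≤ f i t) (hf_one : ∀ i, ∫ t, f i t = 1) {i₀ : ι} (hfg : ∀ i ≠ i₀, f i = g i) :
    ∫ w : ι → ℝ, max (∏ i, f i (w i) - ∏ i, g i (w i)) 0 = ∫ t, max (f i₀ t - g i₀ t) 0 := by
  set h := Function.update f i₀ fun t => max (f i₀ t - g i₀ t) 0
  have hrest : ∀ k : ι → ℝ → ℝ, (∀ i ≠ i₀, k i = f i) → ∀ w : ι → ℝ,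
      ∏ i ∈ {i₀}ᶜ, k i (w i) = ∏ i ∈ {i₀}ᶜ, f i (w i) := fun k hk w =>
    Finset.prod_congr rfl fun i hi => by rw [hk i (by simpa using hi)]
  have hh : ∀ i ≠ i₀, h i = f i := fun i hi => Function.update_of_ne hi _ _
  have hh₀ : h i₀ = fun t => max (f i₀ t - g i₀ t) 0 := Function.update_self _ _ _
  have hprod : ∀ w : ι → ℝ, max (∏ i, f i (w i) - ∏ i, g i (w i)) 0 = ∏ i, h i (w i) := by
    intro w
    rw [Fintype.prod_eq_mul_prod_compl i₀, Fintype.prod_eq_mul_prod_compl i₀,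
      Fintype.prod_eq_mul_prod_compl i₀, hrest g (fun i hi => (hfg i hi).symm), hrest h hh,
      ← sub_mul, hh₀, max_mul_of_nonneg _ _ (Finset.prod_nonneg fun i _ => hf i (w i)), zero_mul]
  simp_rw [hprod]
  rw [integral_fintype_prod_volume_eq_prod, Fintype.prod_eq_mul_prod_compl i₀,
    Finset.prod_eq_one fun i hi => by rw [hh i (by simpa using hi), hf_one], mul_one, hh₀]

variable {ι V : Type*} [Fintype ι] [NormedAddCommGroup V] [InnerProductSpace ℝ V]

variable (V) in
noncomputable def isotropicGaussianPDF (v : ℝ≥0) (z : V) : ℝ :=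
  (2 * π * v) ^ (-(finrank ℝ V : ℝ) / 2) * exp (-‖z‖ ^ 2 / (2 * v))

lemma isotropicGaussianPDF_nonneg (v : ℝ≥0) (z : V) : 0 ≤ isotropicGaussianPDF V v z := by
  rw [isotropicGaussianPDF]
  positivity

lemma isotropicGaussianPDF_repr_symm_sub (b : OrthonormalBasis ι ℝ V) (v : ℝ≥0) (w : ι → ℝ)
    (x : V) :
    isotropicGaussianPDF V v (b.repr.symm (WithLp.toLp 2 w) - x) =
      ∏ i, gaussianPDFReal (b.repr x i) v (w i) := by
  have hnorm : ‖b.repr.symm (WithLp.toLp 2 w) - x‖ ^ 2 = ∑ i, (w i - b.repr x i) ^ 2 := by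
    rw [← b.repr.norm_map, map_sub, LinearIsometryEquiv.apply_symm_apply,
      EuclideanSpace.real_norm_sq_eq]
    rfl
  have hdim : (2 * π * v) ^ (-(finrank ℝ V : ℝ) / 2) = (√(2 * π * v))⁻¹ ^ Fintype.card ι := by
    rw [finrank_eq_card_basis b.toBasis, sqrt_eq_rpow, ← rpow_neg (by positivity),
      ← rpow_mul_natCast (by positivity)]
    ring_nf
  simp only [isotropicGaussianPDF, gaussianPDFReal, hnorm, hdim, Finset.prod_mul_distrib,
    Finset.prod_const, Finset.card_univ, ← exp_sum, ← Finset.sum_div, Finset.sum_neg_distrib]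

variable [FiniteDimensional ℝ V]

lemma exists_orthonormalBasis_apply_eq (hcard : finrank ℝ V = Fintype.card ι) (i₀ : ι) {u : V}
    (hu : ‖u‖ = 1) : ∃ b : OrthonormalBasis ι ℝ V, b i₀ = u := by
  have horth : Orthonormal ℝ (({i₀} : Set ι).domRestrict fun _ => u) := by
    rw [orthonormal_iff_ite]
    rintro ⟨i, rfl⟩ ⟨j, rfl⟩
    simp [hu]
  obtain ⟨b, hb⟩ := horth.exists_orthonormalBasis_extension_of_card_eq hcard
  exact ⟨b, hb i₀ rfl⟩

variable [MeasurableSpace V] [BorelSpace V]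

lemma OrthonormalBasis.integral_comp_repr_symm_toLp {E : Type*} [NormedAddCommGroup E]
    [NormedSpace ℝ E] (b : OrthonormalBasis ι ℝ V) (f : V → E) :
    ∫ w : ι → ℝ, f (b.repr.symm (WithLp.toLp 2 w)) = ∫ z, f z :=
  ((EuclideanSpace.volume_preserving_symm_measurableEquiv_toLp ι).symm.trans
    b.measurePreserving_measurableEquiv.symm).integral_comp' f

lemma integral_isotropicGaussianPDF {v : ℝ≥0} (hv : v ≠ 0) :
    ∫ z, isotropicGaussianPDF V v z = 1 := by
  let b := stdOrthonormalBasis ℝ V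
  have hprod : ∀ w, isotropicGaussianPDF V v (b.repr.symm (WithLp.toLp 2 w)) =
      ∏ i, gaussianPDFReal 0 v (w i) := fun w => by
    simpa using isotropicGaussianPDF_repr_symm_sub b v w 0
  rw [← b.integral_comp_repr_symm_toLp]
  simp_rw [hprod]
  rw [integral_fintype_prod_volume_eq_prod]
  simp [integral_gaussianPDFReal_eq_one 0 hv]

lemma integrable_isotropicGaussianPDF {v : ℝ≥0} (hv : v ≠ 0) :
    Integrable (isotropicGaussianPDF V v) :=
  Integrable.of_integral_ne_zero (by rw [integral_isotropicGaussianPDF hv]; exact one_ne_zero)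

lemma integral_max_isotropicGaussianPDF_sub_le {v : ℝ≥0} (hv : v ≠ 0) (x y : V) :
    ∫ z, max (isotropicGaussianPDF V v (z - x) - isotropicGaussianPDF V v (z - y)) 0 ≤
      ‖x - y‖ * (√(2 * π * v))⁻¹ := by
  rcases eq_or_ne x y with rfl | hxy
  · simp
  have hΔ : x - y ≠ 0 := sub_ne_zero.2 hxy
  have : Nontrivial V := ⟨x, y, hxy⟩
  let i₀ : Fin (finrank ℝ V) := ⟨0, finrank_pos⟩
  have hΔ' : ‖x - y‖ ≠ 0 := norm_ne_zero_iff.2 hΔ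
  obtain ⟨b, hb⟩ := exists_orthonormalBasis_apply_eq (Fintype.card_fin _).symm i₀
    (u := ‖x - y‖⁻¹ • (x - y)) (by rw [norm_smul, norm_inv, norm_norm, inv_mul_cancel₀ hΔ'])
  have hcoord : ∀ i, b.repr x i - b.repr y i = if i = i₀ then ‖x - y‖ else 0 := by
    have : b.repr x - b.repr y = ‖x - y‖ • EuclideanSpace.single i₀ 1 := by
      rw [← map_sub, ← b.repr_self i₀, hb, ← map_smul, smul_inv_smul₀ hΔ']
    intro i
    simpa [PiLp.single_apply, eq_comm] using congrArg (· i) this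
  rw [← b.integral_comp_repr_symm_toLp]
  simp_rw [isotropicGaussianPDF_repr_symm_sub]
  rw [integral_max_prod_sub_prod_of_ne (f := fun i => gaussianPDFReal (b.repr x i) v)
    (g := fun i => gaussianPDFReal (b.repr y i) v) (fun i t => gaussianPDFReal_nonneg _ _ _)
    (fun i => integral_gaussianPDFReal_eq_one _ hv) (i₀ := i₀) fun i hi => by
      rw [sub_eq_zero.1 ((hcoord i).trans (if_neg hi))]]
  have hi₀ : b.repr x i₀ - b.repr y i₀ = ‖x - y‖ := (hcoord i₀).trans (if_pos rfl)
  rw [← hi₀]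
  exact integral_max_gaussianPDFReal_sub_le v (by linarith [norm_nonneg (x - y)])

lemma integral_max_isotropicGaussianPDF_sub_le_half {v : ℝ≥0} {σ a : ℝ} (hσ : 0 < σ)
    (hv : (v : ℝ) = σ ^ 2) (ha : 0 ≤ a) {x y : V} (hxy : ‖x - y‖ ≤ a * σ) :
    ∫ z, max (isotropicGaussianPDF V v (z - x) - isotropicGaussianPDF V v (z - y)) 0 ≤ a / 2 := by
  have hv₀ : v ≠ 0 := fun h => (pow_pos hσ 2).ne' (by rw [← hv, h, NNReal.coe_zero])
  have hpeak : σ * (√(2 * π * v))⁻¹ ≤ 1 / 2 := by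
    have h2 : 2 ≤ √(2 * π) := le_sqrt_of_sq_le (by nlinarith [pi_gt_three])
    rw [hv, sqrt_mul (by positivity), sqrt_sq hσ.le, mul_inv, ← mul_assoc, mul_comm σ, mul_assoc,
      mul_inv_cancel₀ hσ.ne', mul_one, one_div]
    exact inv_anti₀ two_pos h2
  calc _ ≤ ‖x - y‖ * (√(2 * π * v))⁻¹ := integral_max_isotropicGaussianPDF_sub_le hv₀ x y
    _ ≤ a * (σ * (√(2 * π * v))⁻¹) := by rw [← mul_assoc]; gcongr
    _ ≤ a * (1 / 2) := by gcongr
    _ = a / 2 := by ring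

end Gaussian

lemma mul_sub_max_sub_le_min_mul {a b u v : ℝ} (ha : 0 ≤ a) (hab : a ≤ b) (ha1 : a ≤ 1)
    (hv : 0 ≤ v) : a * u - max (u - v) 0 ≤ min (a * u) (b * v) := by
  rcases le_total u v with huv | hvu
  · rw [max_eq_right (by linarith), sub_zero]
    exact le_min le_rfl (by nlinarith)
  · rw [max_eq_left (by linarith)]
    exact le_min (by linarith) (by nlinarith)

lemma bddBelow_of_sInf_ne_zero {s : Set ℝ} (h : sInf s ≠ 0) : BddBelow s :=
  by_contra fun hs => h (Real.sInf_of_not_bddBelow hs)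

section Metropolis

variable {Ω : Type*} {π : Ω → ℝ} {q : Ω → Ω → ℝ}

noncomputable def metropolisDensity (π : Ω → ℝ) (q : Ω → Ω → ℝ) (x z : Ω) : ℝ :=
  min 1 (π z / π x) * q x z

lemma metropolisDensity_nonneg (hπ : ∀ z, 0 ≤ π z) {x z : Ω} (hq : 0 ≤ q x z) :
    0 ≤ metropolisDensity π q x z :=
  mul_nonneg (le_min zero_le_one (div_nonneg (hπ z) (hπ x))) hq

lemma metropolisDensity_le {x z : Ω} (hq : 0 ≤ q x z) : metropolisDensity π q x z ≤ q x z :=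
  mul_le_of_le_one_left hq (min_le_left _ _)

variable [MeasurableSpace Ω] {μ : Measure Ω}

noncomputable def acceptRejectKernel (μ : Measure Ω) (p : Ω → Ω → ℝ) (x : Ω) (A : Set Ω) : ℝ :=
  (∫ y in A, p x y ∂μ) + (1 - ∫ y, p x y ∂μ) * A.indicator (fun _ => 1) x

lemma acceptRejectKernel_sub_le {p : Ω → Ω → ℝ} {x y : Ω} (hx : Integrable (p x) μ)
    (hy : Integrable (p y) μ) (hx_le : ∫ z, p x z ∂μ ≤ 1) (hy_le : ∫ z, p y z ∂μ ≤ 1)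
    {A : Set Ω} (hA : MeasurableSet A) :
    acceptRejectKernel μ p x A - acceptRejectKernel μ p y A ≤
      1 - ∫ z, min (p x z) (p y z) ∂μ := by
  have hmin : Integrable (fun z => min (p x z) (p y z)) μ := hx.inf hy
  have hind : ∀ w, 0 ≤ A.indicator (fun _ => (1 : ℝ)) w ∧ A.indicator (fun _ => (1 : ℝ)) w ≤ 1 :=
    fun w => ⟨Set.indicator_nonneg (fun _ _ => zero_le_one) w,
      Set.indicator_le_self' (fun _ _ => zero_le_one) w⟩
  have hPx : acceptRejectKernel μ p x A ≤ 1 - ∫ z in Aᶜ, p x z ∂μ := by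
    have hstay := mul_le_of_le_one_right (sub_nonneg.2 hx_le) (hind x).2
    have hsplit := integral_add_compl hA hx
    rw [acceptRejectKernel]
    linarith
  have hPy : ∫ z in A, p y z ∂μ ≤ acceptRejectKernel μ p y A :=
    le_add_of_nonneg_right (mul_nonneg (sub_nonneg.2 hy_le) (hind y).1)
  have hAc : ∫ z in Aᶜ, min (p x z) (p y z) ∂μ ≤ ∫ z in Aᶜ, p x z ∂μ :=
    setIntegral_mono hmin.integrableOn hx.integrableOn fun z => min_le_left _ _
  have hA' : ∫ z in A, min (p x z) (p y z) ∂μ ≤ ∫ z in A, p y z ∂μ :=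
    setIntegral_mono hmin.integrableOn hy.integrableOn fun z => min_le_right _ _
  have hsplit := integral_add_compl hA hmin
  linarith

lemma integrable_metropolisDensity (hπ_meas : Measurable π) (hπ : ∀ z, 0 ≤ π z) {x : Ω}
    (hq : ∀ z, 0 ≤ q x z) (hq_int : Integrable (q x) μ) :
    Integrable (metropolisDensity π q x) μ := by
  refine hq_int.mono' (((measurable_const.min (hπ_meas.div_const _)).aestronglyMeasurable).mul
    hq_int.aestronglyMeasurable) (Filter.Eventually.of_forall fun z => ?_)
  rw [Real.norm_of_nonneg (metropolisDensity_nonneg hπ (hq z))]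
  exact metropolisDensity_le (hq z)

lemma integral_metropolisDensity_le {x : Ω} (hq : ∀ z, 0 ≤ q x z)
    (hq_int : Integrable (q x) μ) (hmd_int : Integrable (metropolisDensity π q x) μ) :
    ∫ z, metropolisDensity π q x z ∂μ ≤ ∫ z, q x z ∂μ :=
  integral_mono hmd_int hq_int fun z => metropolisDensity_le (hq z)

-- `π z / 0 = 0` in Lean, so a state of zero density accepts no proposal.
lemma pos_of_integral_metropolisDensity_ne_zero (hπ : ∀ z, 0 ≤ π z) {x : Ω}
    (h : ∫ z, metropolisDensity π q x z ∂μ ≠ 0) : 0 < π x := by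
  refine (hπ x).lt_of_ne fun hx => h ?_
  simp [metropolisDensity, ← hx]

lemma integral_sub_integral_max_sub_le_integral_min_metropolisDensity (hπ : ∀ z, 0 ≤ π z)
    {x y : Ω} (hy : 0 < π y) (hyx : π y ≤ π x) (hq : ∀ z, 0 ≤ q y z)
    (hqx_int : Integrable (q x) μ) (hqy_int : Integrable (q y) μ)
    (hx_int : Integrable (metropolisDensity π q x) μ)
    (hy_int : Integrable (metropolisDensity π q y) μ) :
    ∫ z, metropolisDensity π q x z ∂μ - ∫ z, max (q x z - q y z) 0 ∂μ ≤
      ∫ z, min (metropolisDensity π q x z) (metropolisDensity π q y z) ∂μ := by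
  have hmax : Integrable (fun z => max (q x z - q y z) 0) μ := (hqx_int.sub hqy_int).pos_part
  rw [← integral_sub hx_int hmax]
  refine integral_mono (hx_int.sub hmax) (hx_int.inf hy_int) fun z => ?_
  exact mul_sub_max_sub_le_min_mul (le_min zero_le_one (div_nonneg (hπ z) (hy.le.trans hyx)))
    (min_le_min le_rfl (div_le_div_of_nonneg_left (hπ z) hy hyx)) (min_le_left _ _) (hq z)

lemma abs_acceptRejectKernel_sub_le {p : Ω → Ω → ℝ} {x y : Ω} (hx : Integrable (p x) μ)
    (hy : Integrable (p y) μ) (hx_le : ∫ z, p x z ∂μ ≤ 1) (hy_le : ∫ z, p y z ∂μ ≤ 1)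
    {A : Set Ω} (hA : MeasurableSet A) :
    |acceptRejectKernel μ p x A - acceptRejectKernel μ p y A| ≤
      1 - ∫ z, min (p x z) (p y z) ∂μ := by
  refine abs_sub_le_iff.2 ⟨acceptRejectKernel_sub_le hx hy hx_le hy_le hA, ?_⟩
  simpa only [min_comm] using acceptRejectKernel_sub_le hy hx hy_le hx_le hA

lemma min_integral_sub_le_integral_min_metropolisDensity (hπ_meas : Measurable π)
    (hπ : ∀ z, 0 ≤ π z) {x y : Ω} (hx : 0 < π x) (hy : 0 < π y) (hq : ∀ w z, 0 ≤ q w z)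
    (hq_int : ∀ w, Integrable (q w) μ) {c : ℝ}
    (hxy : ∫ z, max (q x z - q y z) 0 ∂μ ≤ c) (hyx : ∫ z, max (q y z - q x z) 0 ∂μ ≤ c) :
    min (∫ z, metropolisDensity π q x z ∂μ) (∫ z, metropolisDensity π q y z ∂μ) - c ≤
      ∫ z, min (metropolisDensity π q x z) (metropolisDensity π q y z) ∂μ := by
  have hint : ∀ w, Integrable (metropolisDensity π q w) μ :=
    fun w => integrable_metropolisDensity hπ_meas hπ (hq w) (hq_int w)
  rcases le_total (π y) (π x) with h | h
  · have := integral_sub_integral_max_sub_le_integral_min_metropolisDensity hπ hy h (hq y)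
      (hq_int x) (hq_int y) (hint x) (hint y)
    linarith [min_le_left (∫ z, metropolisDensity π q x z ∂μ) (∫ z, metropolisDensity π q y z ∂μ)]
  · have := integral_sub_integral_max_sub_le_integral_min_metropolisDensity hπ hx h (hq x)
      (hq_int y) (hq_int x) (hint y) (hint x)
    simp only [min_comm (metropolisDensity π q y _)] at this
    linarith [min_le_right (∫ z, metropolisDensity π q x z ∂μ) (∫ z, metropolisDensity π q y z ∂μ)]

lemma abs_acceptRejectKernel_metropolisDensity_sub_le (hπ_meas : Measurable π)
    (hπ : ∀ z, 0 ≤ π z) (hq : ∀ w z, 0 ≤ q w z) (hq_int : ∀ w, Integrable (q w) μ)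
    (hq_one : ∀ w, ∫ z, q w z ∂μ = 1) {a c : ℝ} (ha : 0 < a) {x y : Ω}
    (hax : a ≤ ∫ z, metropolisDensity π q x z ∂μ) (hay : a ≤ ∫ z, metropolisDensity π q y z ∂μ)
    (hxy : ∫ z, max (q x z - q y z) 0 ∂μ ≤ c) (hyx : ∫ z, max (q y z - q x z) 0 ∂μ ≤ c)
    {A : Set Ω} (hA : MeasurableSet A) :
    |acceptRejectKernel μ (metropolisDensity π q) x A -
      acceptRejectKernel μ (metropolisDensity π q) y A| ≤ 1 - (a - c) := by
  have hint : ∀ w, Integrable (metropolisDensity π q w) μ :=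
    fun w => integrable_metropolisDensity hπ_meas hπ (hq w) (hq_int w)
  have hle : ∀ w, ∫ z, metropolisDensity π q w z ∂μ ≤ 1 := fun w =>
    (integral_metropolisDensity_le (hq w) (hq_int w) (hint w)).trans_eq (hq_one w)
  have hpos : ∀ w, a ≤ ∫ z, metropolisDensity π q w z ∂μ → 0 < π w := fun w h =>
    pos_of_integral_metropolisDensity_ne_zero hπ (ha.trans_le h).ne'
  have hoverlap := min_integral_sub_le_integral_min_metropolisDensity hπ_meas hπ
    (hpos x hax) (hpos y hay) hq hq_int hxy hyx
  refine (abs_acceptRejectKernel_sub_le (hint x) (hint y) (hle x) (hle y) hA).trans ?_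
  linarith [le_min hax hay]

end Metropolis

theorem rwm_one_step_overlap_general
    (d : ℕ)
    (π : EuclideanSpace ℝ (Fin d) → ℝ)
    (hπ_meas : Measurable π)
    (hπ_nonneg : ∀ x, 0 ≤ π x)
    (σ : ℝ) (hσ : 0 < σ)
    -- the density of the Gaussian proposal increment `N(0, σ²I_d)`
    (φ : EuclideanSpace ℝ (Fin d) → ℝ)
    (hφ : ∀ z, φ z = (2 * Real.pi * σ ^ 2) ^ (-(d : ℝ) / 2) *
      Real.exp (-‖z‖ ^ 2 / (2 * σ ^ 2)))
    -- the acceptance rate `α(x)` and its infimum `α₀ > 0`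
    (α : EuclideanSpace ℝ (Fin d) → ℝ)
    (hα : ∀ x, α x = ∫ y, min 1 (π y / π x) * φ (y - x))
    (α₀ : ℝ) (hα₀ : α₀ = sInf (Set.range α)) (hα₀_pos : 0 < α₀)
    -- the Random Walk Metropolis kernel
    (P : EuclideanSpace ℝ (Fin d) → Set (EuclideanSpace ℝ (Fin d)) → ℝ)
    (hP : ∀ x A, P x A = (∫ y in A, min 1 (π y / π x) * φ (y - x)) +
      (1 - α x) * Set.indicator A (fun _ => (1 : ℝ)) x) :
    ∀ x y : EuclideanSpace ℝ (Fin d), ‖x - y‖ ≤ α₀ * σ →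
      ∀ A : Set (EuclideanSpace ℝ (Fin d)), MeasurableSet A →
        |P x A - P y A| ≤ 1 - α₀ / 2 := by
  intro x y hxy A hA
  set v : NNReal := ⟨σ ^ 2, sq_nonneg σ⟩
  have hv : v ≠ 0 := fun h => (pow_pos hσ 2).ne' (congrArg NNReal.toReal h)
  obtain rfl : φ = isotropicGaussianPDF _ v := funext fun z => by
    rw [hφ, isotropicGaussianPDF, finrank_euclideanSpace_fin]; rfl
  set q := fun w z => isotropicGaussianPDF (EuclideanSpace ℝ (Fin d)) v (z - w)
  have hα' : ∀ w, α w = ∫ z, metropolisDensity π q w z := hα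
  have hP' : ∀ w, P w A = acceptRejectKernel volume (metropolisDensity π q) w A := fun w => by
    rw [hP, hα']; rfl
  have hbdd : BddBelow (Set.range α) := bddBelow_of_sInf_ne_zero (hα₀ ▸ hα₀_pos.ne')
  have hα_ge : ∀ w, α₀ ≤ ∫ z, metropolisDensity π q w z := fun w => by
    rw [hα₀, ← hα']
    exact csInf_le hbdd ⟨w, rfl⟩
  rw [hP', hP']
  refine (abs_acceptRejectKernel_metropolisDensity_sub_le hπ_meas hπ_nonneg
    (fun w z => isotropicGaussianPDF_nonneg v (z - w))
    (fun w => (integrable_isotropicGaussianPDF hv).comp_sub_right w)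
    (fun w => (integral_sub_right_eq_self _ w).trans (integral_isotropicGaussianPDF hv))
    hα₀_pos (hα_ge x) (hα_ge y)
    (integral_max_isotropicGaussianPDF_sub_le_half hσ rfl hα₀_pos.le hxy)
    (integral_max_isotropicGaussianPDF_sub_le_half hσ rfl hα₀_pos.le (by rwa [norm_sub_rev]))
    hA).trans_eq (by ring)

/-- **One-step overlap property of the RWM kernel (Lemma 2.4).**
Let `π` be a probability density on `ℝ^d` and let `P` be the Random Walk Metropolis
kernel for `π` with Gaussian proposal `N(x, σ²I_d)`, with `α₀ = inf_x α(x) > 0` the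
infimum of the acceptance rate.  Then for all `x, y` with `‖x − y‖ ≤ α₀·σ`, the total
variation distance satisfies `d_TV(P(x,·), P(y,·)) ≤ 1 − α₀/2`, i.e.
`|P(x, A) − P(y, A)| ≤ 1 − α₀/2` for every Borel set `A`. -/
theorem rwm_one_step_overlap
    (d : ℕ)
    (π : EuclideanSpace ℝ (Fin d) → ℝ)
    (hπ_meas : Measurable π)
    (hπ_nonneg : ∀ x, 0 ≤ π x)
    (hπ_prob : ∫ x, π x = 1)
    (σ : ℝ) (hσ : 0 < σ)
    -- the density of the Gaussian proposal increment `N(0, σ²I_d)`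
    (φ : EuclideanSpace ℝ (Fin d) → ℝ)
    (hφ : ∀ z, φ z = (2 * Real.pi * σ ^ 2) ^ (-(d : ℝ) / 2) *
      Real.exp (-‖z‖ ^ 2 / (2 * σ ^ 2)))
    -- the acceptance rate `α(x)` and its infimum `α₀ > 0`
    (α : EuclideanSpace ℝ (Fin d) → ℝ)
    (hα : ∀ x, α x = ∫ y, min 1 (π y / π x) * φ (y - x))
    (α₀ : ℝ) (hα₀ : α₀ = sInf (Set.range α)) (hα₀_pos : 0 < α₀)
    -- the Random Walk Metropolis kernel
    (P : EuclideanSpace ℝ (Fin d) → Set (EuclideanSpace ℝ (Fin d)) → ℝ)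
    (hP : ∀ x A, P x A = (∫ y in A, min 1 (π y / π x) * φ (y - x)) +
      (1 - α x) * Set.indicator A (fun _ => (1 : ℝ)) x) :
    ∀ x y : EuclideanSpace ℝ (Fin d), ‖x - y‖ ≤ α₀ * σ →
      ∀ A : Set (EuclideanSpace ℝ (Fin d)), MeasurableSet A →
        |P x A - P y A| ≤ 1 - α₀ / 2 :=
  rwm_one_step_overlap_general d π hπ_meas hπ_nonneg σ hσ φ hφ α hα α₀ hα₀ hα₀_pos P hP
end

section
/- Let π be a probability density on ℝ^d and let P be the Random Walk Metropolis kernel for π with Gaussian proposal N(x, σ²I_d). Then P is a positive operator on L²(π): for every f ∈ L²(π), ⟨f, Pf⟩_π = ∫∫ f(x) f(y) π(dx) P(x, dy) ≥ 0. -/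
/-!
Since `π(x) min{1, π(y)/π(x)} = min{π(x), π(y)}`, the form `⟨f, Pf⟩_π` splits into the holding
part `∫ π (1 - α) f²`, nonnegative because `α ≤ 1`, and `∫∫ f(x) f(y) min{π(x), π(y)} φ_σ(y - x)`.
The kernel of the latter is a Gram kernel: by the layer-cake formula
`min{a, b} = ∫_0^∞ 1[t < a] 1[t < b] dt` and the semigroup property
`φ_σ(y - x) = ∫ ψ(z - x) ψ(z - y) dz`, where `ψ` is the Gaussian density of variance `σ²/2`,
`min{π(x), π(y)} φ_σ(y - x) = ∫ k(x, u) k(y, u) du` with `k(x, (t, z)) = 1[t < π(x)] ψ(z - x)`,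
so the double integral equals `∫ (∫ f(x) k(x, u) dx)² du ≥ 0`.
-/

open MeasureTheory Set

section GaussianDensity

open Real Module

variable {V : Type*} [NormedAddCommGroup V] [InnerProductSpace ℝ V] {v : ℝ}

noncomputable def gaussianDensity (v : ℝ) (z : V) : ℝ :=
  (2 * π * v) ^ (-(finrank ℝ V : ℝ) / 2) * exp (-‖z‖ ^ 2 / (2 * v))

theorem gaussianDensity_nonneg (hv : 0 ≤ v) (z : V) : 0 ≤ gaussianDensity v z := by
  unfold gaussianDensity; positivity

theorem continuous_gaussianDensity (v : ℝ) : Continuous (gaussianDensity v : V → ℝ) := by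
  unfold gaussianDensity; fun_prop

/-- The parallelogram law `‖a‖² + ‖b‖² = ‖a - b‖² / 2 + 2 ‖(a + b) / 2‖²`, exponentiated. -/
theorem gaussianDensity_mul_gaussianDensity (hv : 0 < v) (a b : V) :
    gaussianDensity v a * gaussianDensity v b =
      gaussianDensity (2 * v) (a - b) * gaussianDensity (v / 2) ((2 : ℝ)⁻¹ • (a + b)) := by
  set r := -(finrank ℝ V : ℝ) / 2
  have hconst :
      (2 * π * v) ^ r * (2 * π * v) ^ r = (2 * π * (2 * v)) ^ r * (2 * π * (v / 2)) ^ r := by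
    rw [← mul_rpow (by positivity) (by positivity), ← mul_rpow (by positivity) (by positivity)]
    ring_nf
  have hexp : -‖a‖ ^ 2 / (2 * v) + -‖b‖ ^ 2 / (2 * v) =
      -‖a - b‖ ^ 2 / (2 * (2 * v)) + -‖(2 : ℝ)⁻¹ • (a + b)‖ ^ 2 / (2 * (v / 2)) := by
    rw [norm_smul, Real.norm_of_nonneg (by norm_num)]
    field_simp
    linarith [parallelogram_law_with_norm ℝ a b]
  calc gaussianDensity v a * gaussianDensity v b
      = ((2 * π * v) ^ r * (2 * π * v) ^ r) *
          exp (-‖a‖ ^ 2 / (2 * v) + -‖b‖ ^ 2 / (2 * v)) := by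
        rw [exp_add]; unfold gaussianDensity; ring
    _ = _ := by
        rw [hconst, hexp, exp_add]; unfold gaussianDensity; ring

theorem gaussianDensity_sub_comm (x y : V) :
    gaussianDensity v (x - y) = gaussianDensity v (y - x) := by
  rw [gaussianDensity, gaussianDensity, norm_sub_rev]

theorem gaussianDensity_sub_mul_gaussianDensity_sub (hv : 0 < v) (x y z : V) :
    gaussianDensity v (z - x) * gaussianDensity v (z - y) =
      gaussianDensity (2 * v) (y - x) * gaussianDensity (v / 2) (z - (2 : ℝ)⁻¹ • (x + y)) := by
  rw [gaussianDensity_mul_gaussianDensity hv, sub_sub_sub_cancel_left]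
  congr 3
  module

variable [FiniteDimensional ℝ V] [MeasurableSpace V] [BorelSpace V]

theorem integral_gaussianDensity (hv : 0 < v) : ∫ z : V, gaussianDensity v z = 1 := by
  have hexp (z : V) : exp (-‖z‖ ^ 2 / (2 * v)) = exp (-(2 * v)⁻¹ * ‖z‖ ^ 2) := by
    ring_nf
  simp only [gaussianDensity, hexp]
  rw [integral_const_mul, GaussianFourier.integral_rexp_neg_mul_sq_norm (by positivity),
    div_inv_eq_mul, show π * (2 * v) = 2 * π * v by ring, neg_div, rpow_neg (by positivity),
    inv_mul_cancel₀ (by positivity)]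

theorem integrable_gaussianDensity (hv : 0 < v) : Integrable (gaussianDensity v : V → ℝ) :=
  Integrable.of_integral_ne_zero (by rw [integral_gaussianDensity hv]; exact one_ne_zero)

theorem integrable_gaussianDensity_sub_mul_gaussianDensity_sub (hv : 0 < v) (x y : V) :
    Integrable fun z => gaussianDensity v (z - x) * gaussianDensity v (z - y) := by
  simp only [gaussianDensity_sub_mul_gaussianDensity_sub hv]
  exact ((integrable_gaussianDensity (by positivity)).comp_sub_right _).const_mul _

theorem integrable_mul_gaussianDensity_sub (hv : 0 < v) {c : V → ℝ} (hc : Integrable c) :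
    Integrable (fun q : V × V => c q.1 * gaussianDensity v (q.2 - q.1)) (volume.prod volume) := by
  have hmeas : AEStronglyMeasurable (fun q : V × V => c q.1 * gaussianDensity v (q.2 - q.1))
      (volume.prod volume) :=
    hc.1.comp_fst.mul ((continuous_gaussianDensity v).comp
      (continuous_snd.sub continuous_fst)).aestronglyMeasurable
  refine (integrable_prod_iff hmeas).2
    ⟨ae_of_all _ fun x => ((integrable_gaussianDensity hv).comp_sub_right x).const_mul (c x),
      hc.norm.congr (ae_of_all _ fun x => ?_)⟩
  simp only [norm_mul, Real.norm_of_nonneg (gaussianDensity_nonneg hv.le _)]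
  rw [integral_const_mul, integral_sub_right_eq_self, integral_gaussianDensity hv, mul_one]

theorem integral_gaussianDensity_sub_mul_gaussianDensity_sub (hv : 0 < v) (x y : V) :
    ∫ z, gaussianDensity v (z - x) * gaussianDensity v (z - y) =
      gaussianDensity (2 * v) (y - x) := by
  simp only [gaussianDensity_sub_mul_gaussianDensity_sub hv]
  rw [integral_const_mul, integral_sub_right_eq_self (gaussianDensity (v / 2)),
    integral_gaussianDensity (by positivity), mul_one]

end GaussianDensity

theorem indicator_Iio_mul_indicator_Iio (a b t : ℝ) :
    (Iio a).indicator (1 : ℝ → ℝ) t * (Iio b).indicator 1 t = (Iio (min a b)).indicator 1 t := by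
  rw [← Pi.mul_apply, ← inter_indicator_one, Iio_inter_Iio]

theorem integrableOn_indicator_Iio_mul_indicator_Iio (a b : ℝ) :
    IntegrableOn (fun t => (Iio a).indicator (1 : ℝ → ℝ) t * (Iio b).indicator 1 t) (Ioi 0) := by
  simp only [indicator_Iio_mul_indicator_Iio]
  refine (integrable_indicator_iff measurableSet_Iio).2 (integrableOn_const ?_)
  rw [Measure.restrict_apply measurableSet_Iio, Iio_inter_Ioi, Real.volume_Ioo]
  exact ENNReal.ofReal_ne_top

theorem integral_Ioi_indicator_Iio_mul_indicator_Iio {a b : ℝ} (ha : 0 ≤ a) (hb : 0 ≤ b) :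
    ∫ t in Ioi 0, (Iio a).indicator (1 : ℝ → ℝ) t * (Iio b).indicator 1 t = min a b := by
  simp only [indicator_Iio_mul_indicator_Iio]
  rw [integral_indicator_one measurableSet_Iio, measureReal_restrict_apply measurableSet_Iio,
    Iio_inter_Ioi, Real.volume_real_Ioo_of_le (le_min ha hb), sub_zero]

theorem integral_mul_mul_integral_mul_nonneg {X U : Type*} [MeasurableSpace X] [MeasurableSpace U]
    {μ : Measure X} {ν : Measure U} [SFinite μ] [SFinite ν] {f : X → ℝ} {k : X → U → ℝ}
    (hf : Measurable f) (hk : Measurable (Function.uncurry k)) (hk_nonneg : ∀ x u, 0 ≤ k x u)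
    (hkk : ∀ x y, Integrable (fun u => k x u * k y u) ν)
    (hF : Integrable (fun q : X × X => f q.1 * f q.2 * ∫ u, k q.1 u * k q.2 u ∂ν) (μ.prod μ)) :
    0 ≤ ∫ q : X × X, f q.1 * f q.2 * ∫ u, k q.1 u * k q.2 u ∂ν ∂(μ.prod μ) := by
  set G : X × X → U → ℝ := fun q u => f q.1 * k q.1 u * (f q.2 * k q.2 u)
  have hG_int : Integrable (Function.uncurry G) ((μ.prod μ).prod ν) := by
    have hk₁ : Measurable fun r : (X × X) × U => k r.1.1 r.2 :=
      hk.comp (measurable_fst.fst.prodMk measurable_snd)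
    have hk₂ : Measurable fun r : (X × X) × U => k r.1.2 r.2 :=
      hk.comp (measurable_fst.snd.prodMk measurable_snd)
    have hG_meas : Measurable (Function.uncurry G) :=
      ((hf.comp measurable_fst.fst).mul hk₁).mul ((hf.comp measurable_fst.snd).mul hk₂)
    refine (integrable_prod_iff hG_meas.aestronglyMeasurable).2
      ⟨ae_of_all _ fun q => ?_, hF.norm.congr (ae_of_all _ fun q => ?_)⟩
    · refine ((hkk q.1 q.2).const_mul (f q.1 * f q.2)).congr (ae_of_all _ fun u => ?_)
      simp only [G, Function.uncurry_apply_pair]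
      ring
    · have hKq : 0 ≤ ∫ u, k q.1 u * k q.2 u ∂ν :=
        integral_nonneg fun u => mul_nonneg (hk_nonneg _ _) (hk_nonneg _ _)
      simp only [G, Function.uncurry_apply_pair, norm_mul, Real.norm_eq_abs,
        abs_of_nonneg (hk_nonneg _ _), abs_of_nonneg hKq]
      rw [← integral_const_mul]
      exact integral_congr_ae (ae_of_all _ fun u => by ring)
  calc 0 ≤ ∫ u, (∫ x, f x * k x u ∂μ) ^ 2 ∂ν := integral_nonneg fun _ => sq_nonneg _
    _ = ∫ u, ∫ q, G q u ∂(μ.prod μ) ∂ν := integral_congr_ae <| ae_of_all _ fun u =>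
        (sq _).trans (integral_prod_mul (fun x => f x * k x u) (fun x => f x * k x u)).symm
    _ = ∫ q, ∫ u, G q u ∂ν ∂(μ.prod μ) := (integral_integral_swap hG_int).symm
    _ = _ := integral_congr_ae <| ae_of_all _ fun q => by
        simp only [G, ← integral_const_mul]
        exact integral_congr_ae (ae_of_all _ fun u => by ring)

theorem abs_mul_abs_mul_min_le {a b s t : ℝ} (ha : 0 ≤ a) (hb : 0 ≤ b) :
    |s| * |t| * min a b ≤ 2⁻¹ * (a * s ^ 2 + b * t ^ 2) := by
  have hst : 2 * (|s| * |t|) ≤ s ^ 2 + t ^ 2 := by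
    nlinarith [sq_nonneg (|s| - |t|), sq_abs s, sq_abs t]
  nlinarith [mul_le_mul_of_nonneg_right hst (le_min ha hb),
    mul_le_mul_of_nonneg_left (min_le_left a b) (sq_nonneg s),
    mul_le_mul_of_nonneg_left (min_le_right a b) (sq_nonneg t)]

theorem mul_min_one_div {a b : ℝ} (ha : 0 ≤ a) (hb : 0 ≤ b) : a * min 1 (b / a) = min a b := by
  rcases ha.eq_or_lt with rfl | ha
  · simp [hb]
  · rw [mul_min_of_nonneg _ _ ha.le, mul_one, mul_div_cancel₀ _ ha.ne']

section RandomWalkMetropolis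

variable {V : Type*} [NormedAddCommGroup V] [InnerProductSpace ℝ V] {p f : V → ℝ} {v : ℝ}

/-- `π(x)` times the density of an accepted move from `x` to `y`; symmetric in `x` and `y`. -/
noncomputable def rwmFlow (p : V → ℝ) (v : ℝ) (x y : V) : ℝ :=
  min (p x) (p y) * gaussianDensity v (y - x)

noncomputable def rwmFlowFactor (p : V → ℝ) (v : ℝ) (x : V) (u : ℝ × V) : ℝ :=
  (Iio (p x)).indicator 1 u.1 * gaussianDensity (v / 2) (u.2 - x)

theorem rwmFlowFactor_nonneg (hv : 0 ≤ v) (x : V) (u : ℝ × V) : 0 ≤ rwmFlowFactor p v x u :=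
  mul_nonneg (indicator_nonneg (fun _ _ => zero_le_one) _)
    (gaussianDensity_nonneg (by positivity) _)

theorem rwmFlowFactor_mul_rwmFlowFactor (x y : V) (u : ℝ × V) :
    rwmFlowFactor p v x u * rwmFlowFactor p v y u =
      (Iio (p x)).indicator 1 u.1 * (Iio (p y)).indicator 1 u.1 *
        (gaussianDensity (v / 2) (u.2 - x) * gaussianDensity (v / 2) (u.2 - y)) := by
  unfold rwmFlowFactor; ring

variable [FiniteDimensional ℝ V] [MeasurableSpace V] [BorelSpace V]

theorem measurable_rwmFlowFactor (hp : Measurable p) :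
    Measurable (Function.uncurry (rwmFlowFactor p v)) := by
  have hI : MeasurableSet {r : V × (ℝ × V) | r.2.1 < p r.1} :=
    measurableSet_lt measurable_snd.fst (hp.comp measurable_fst)
  simp only [Function.uncurry_def, rwmFlowFactor, indicator_apply, mem_Iio, Pi.one_apply]
  exact (Measurable.ite hI measurable_const measurable_const).mul
    ((continuous_gaussianDensity _).measurable.comp (measurable_snd.snd.sub measurable_fst))

theorem integrable_rwmFlowFactor_mul (hv : 0 < v) (x y : V) :
    Integrable (fun u => rwmFlowFactor p v x u * rwmFlowFactor p v y u)
      ((volume.restrict (Ioi 0)).prod volume) := by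
  simp only [rwmFlowFactor_mul_rwmFlowFactor]
  exact (integrableOn_indicator_Iio_mul_indicator_Iio _ _).mul_prod
    (integrable_gaussianDensity_sub_mul_gaussianDensity_sub (by positivity) x y)

theorem integral_rwmFlowFactor_mul (hv : 0 < v) (hp : ∀ x, 0 ≤ p x) (x y : V) :
    ∫ u, rwmFlowFactor p v x u * rwmFlowFactor p v y u ∂(volume.restrict (Ioi 0)).prod volume =
      rwmFlow p v x y := by
  simp only [rwmFlowFactor_mul_rwmFlowFactor]
  refine (integral_prod_mul (fun t => (Iio (p x)).indicator 1 t * (Iio (p y)).indicator 1 t)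
    (fun z => gaussianDensity (v / 2) (z - x) * gaussianDensity (v / 2) (z - y))).trans ?_
  rw [integral_Ioi_indicator_Iio_mul_indicator_Iio (hp x) (hp y),
    integral_gaussianDensity_sub_mul_gaussianDensity_sub (by positivity),
    mul_div_cancel₀ _ two_ne_zero, rwmFlow]

theorem integrable_rwmFlow_quadratic (hv : 0 < v) (hp_meas : Measurable p) (hp : ∀ x, 0 ≤ p x)
    (hf : Measurable f) (hpf : Integrable fun x => p x * f x ^ 2) :
    Integrable (fun q : V × V => f q.1 * f q.2 * rwmFlow p v q.1 q.2) (volume.prod volume) := by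
  have h₁ := integrable_mul_gaussianDensity_sub hv hpf
  have h₂ : Integrable (fun q : V × V => p q.2 * f q.2 ^ 2 * gaussianDensity v (q.2 - q.1))
      (volume.prod volume) :=
    h₁.swap.congr (ae_of_all _ fun q => by
      simp only [Function.comp_apply, Prod.fst_swap, Prod.snd_swap]
      rw [gaussianDensity_sub_comm])
  refine ((h₁.add h₂).const_mul 2⁻¹).mono' ?_ (ae_of_all _ fun q => ?_)
  · exact ((hf.comp measurable_fst).mul (hf.comp measurable_snd)).mul
      (((hp_meas.comp measurable_fst).min (hp_meas.comp measurable_snd)).mul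
        ((continuous_gaussianDensity v).measurable.comp
          (measurable_snd.sub measurable_fst))) |>.aestronglyMeasurable
  · have hg := gaussianDensity_nonneg hv.le (q.2 - q.1)
    calc ‖f q.1 * f q.2 * rwmFlow p v q.1 q.2‖
        = |f q.1| * |f q.2| * min (p q.1) (p q.2) * gaussianDensity v (q.2 - q.1) := by
          rw [rwmFlow, Real.norm_eq_abs, abs_mul, abs_mul, abs_mul, abs_of_nonneg hg,
            abs_of_nonneg (le_min (hp _) (hp _))]
          ring
      _ ≤ 2⁻¹ * (p q.1 * f q.1 ^ 2 + p q.2 * f q.2 ^ 2) * gaussianDensity v (q.2 - q.1) :=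
          mul_le_mul_of_nonneg_right (abs_mul_abs_mul_min_le (hp _) (hp _)) hg
      _ = _ := by simp only [Pi.add_apply]; ring

theorem integral_rwmFlow_quadratic_nonneg (hv : 0 < v) (hp_meas : Measurable p)
    (hp : ∀ x, 0 ≤ p x) (hf : Measurable f) (hpf : Integrable fun x => p x * f x ^ 2) :
    0 ≤ ∫ q : V × V, f q.1 * f q.2 * rwmFlow p v q.1 q.2 ∂(volume.prod volume) := by
  have hF := integrable_rwmFlow_quadratic hv hp_meas hp hf hpf
  simp only [← integral_rwmFlowFactor_mul hv hp] at hF ⊢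
  exact integral_mul_mul_integral_mul_nonneg hf (measurable_rwmFlowFactor hp_meas)
    (rwmFlowFactor_nonneg hv.le) (integrable_rwmFlowFactor_mul hv) hF

noncomputable def acceptanceRate (p : V → ℝ) (v : ℝ) (x : V) : ℝ :=
  ∫ y, min 1 (p y / p x) * gaussianDensity v (y - x)

noncomputable def rwmOperator (p : V → ℝ) (v : ℝ) (f : V → ℝ) (x : V) : ℝ :=
  (∫ y, f y * (min 1 (p y / p x) * gaussianDensity v (y - x))) + (1 - acceptanceRate p v x) * f x

theorem acceptanceRate_nonneg (hv : 0 ≤ v) (hp : ∀ x, 0 ≤ p x) (x : V) :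
    0 ≤ acceptanceRate p v x :=
  integral_nonneg fun y =>
    mul_nonneg (le_min zero_le_one (div_nonneg (hp y) (hp x))) (gaussianDensity_nonneg hv _)

theorem acceptanceRate_le_one (hv : 0 < v) (hp : ∀ x, 0 ≤ p x) (x : V) :
    acceptanceRate p v x ≤ 1 := by
  have hg y : 0 ≤ gaussianDensity v (y - x) := gaussianDensity_nonneg hv.le _
  calc acceptanceRate p v x ≤ ∫ y, gaussianDensity v (y - x) :=
        integral_mono_of_nonneg
          (ae_of_all _ fun y => mul_nonneg (le_min zero_le_one (div_nonneg (hp y) (hp x))) (hg y))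
          ((integrable_gaussianDensity hv).comp_sub_right x)
          (ae_of_all _ fun y => mul_le_of_le_one_left (hg y) (min_le_left _ _))
    _ = 1 := by rw [integral_sub_right_eq_self, integral_gaussianDensity hv]

theorem measurable_acceptanceRate (hp : Measurable p) : Measurable (acceptanceRate p v) :=
  (((measurable_const.min ((hp.comp measurable_snd).div (hp.comp measurable_fst))).mul
    ((continuous_gaussianDensity v).measurable.comp (measurable_snd.sub measurable_fst))
      ).stronglyMeasurable.integral_prod_right').measurable

theorem mul_mul_rwmOperator (hp : ∀ x, 0 ≤ p x) (x : V) :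
    p x * f x * rwmOperator p v f x =
      (∫ y, f x * f y * rwmFlow p v x y) + p x * (1 - acceptanceRate p v x) * f x ^ 2 := by
  have hflow : p x * ∫ y, f y * (min 1 (p y / p x) * gaussianDensity v (y - x)) =
      ∫ y, f y * rwmFlow p v x y := by
    rw [← integral_const_mul]
    congr 1 with y
    rw [rwmFlow, ← mul_min_one_div (hp x) (hp y)]
    ring
  simp only [mul_assoc (f x), integral_const_mul]
  rw [← hflow, rwmOperator]
  ring

theorem integral_mul_mul_rwmOperator_nonneg (hv : 0 < v) (hp_meas : Measurable p)
    (hp : ∀ x, 0 ≤ p x) (hf : Measurable f) (hpf : Integrable fun x => p x * f x ^ 2) :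
    0 ≤ ∫ x, p x * f x * rwmOperator p v f x := by
  have hflow := integrable_rwmFlow_quadratic hv hp_meas hp hf hpf
  have hhold_nonneg x : 0 ≤ p x * (1 - acceptanceRate p v x) * f x ^ 2 :=
    mul_nonneg (mul_nonneg (hp x) (sub_nonneg.2 (acceptanceRate_le_one hv hp x))) (sq_nonneg _)
  have hhold : Integrable fun x => p x * (1 - acceptanceRate p v x) * f x ^ 2 := by
    refine hpf.mono' ((hp_meas.mul (measurable_const.sub (measurable_acceptanceRate hp_meas))).mul
      (hf.pow_const 2)).aestronglyMeasurable (ae_of_all _ fun x => ?_)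
    rw [Real.norm_of_nonneg (hhold_nonneg x)]
    exact mul_le_mul_of_nonneg_right (mul_le_of_le_one_right (hp x)
      (sub_le_self _ (acceptanceRate_nonneg hv.le hp x))) (sq_nonneg _)
  simp only [mul_mul_rwmOperator hp]
  rw [integral_add hflow.integral_prod_left hhold, ← integral_prod _ hflow]
  exact add_nonneg (integral_rwmFlow_quadratic_nonneg hv hp_meas hp hf hpf)
    (integral_nonneg hhold_nonneg)

end RandomWalkMetropolis

theorem rwm_positive_operator_general
    (d : ℕ)
    (π : EuclideanSpace ℝ (Fin d) → ℝ)
    (hπ_meas : Measurable π)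
    (hπ_nonneg : ∀ x, 0 ≤ π x)
    (σ : ℝ) (hσ : 0 < σ)
    -- the density of the Gaussian proposal increment `N(0, σ²I_d)`
    (φ : EuclideanSpace ℝ (Fin d) → ℝ)
    (hφ : ∀ z, φ z = (2 * Real.pi * σ ^ 2) ^ (-(d : ℝ) / 2) *
      Real.exp (-‖z‖ ^ 2 / (2 * σ ^ 2)))
    -- the acceptance rate `α(x)`
    (α : EuclideanSpace ℝ (Fin d) → ℝ)
    (hα : ∀ x, α x = ∫ y, min 1 (π y / π x) * φ (y - x))
    -- the action of the RWM kernel on functions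
    (Pf : (EuclideanSpace ℝ (Fin d) → ℝ) → EuclideanSpace ℝ (Fin d) → ℝ)
    (hPf : ∀ f x, Pf f x = (∫ y, f y * (min 1 (π y / π x) * φ (y - x))) +
      (1 - α x) * f x) :
    ∀ f : EuclideanSpace ℝ (Fin d) → ℝ, Measurable f →
      Integrable (fun x => π x * f x ^ 2) →
      0 ≤ ∫ x, π x * f x * Pf f x := by
  intro f hf hπf
  obtain rfl : φ = gaussianDensity (σ ^ 2) := funext fun z => by
    rw [hφ, gaussianDensity, finrank_euclideanSpace_fin]
  obtain rfl : α = acceptanceRate π (σ ^ 2) := funext hα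
  obtain rfl : Pf = rwmOperator π (σ ^ 2) := funext fun f => funext (hPf f)
  exact integral_mul_mul_rwmOperator_nonneg (by positivity) hπ_meas hπ_nonneg hf hπf

/-- **Positivity of the RWM kernel on `L²(π)`.**
Let `π` be a probability density on `ℝ^d` and let `P` be the Random Walk Metropolis
kernel for `π` with Gaussian proposal `N(x, σ²I_d)`.  Then `P` is a positive operator
on `L²(π)`: for every `f ∈ L²(π)`, `⟨f, Pf⟩_π = ∫ π(x) f(x) (Pf)(x) dx ≥ 0`, where
`(Pf)(x) = ∫ f(y) min{1, π(y)/π(x)} φ_σ(y − x) dy + (1 − α(x)) f(x)`. -/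
theorem rwm_positive_operator
    (d : ℕ)
    (π : EuclideanSpace ℝ (Fin d) → ℝ)
    (hπ_meas : Measurable π)
    (hπ_nonneg : ∀ x, 0 ≤ π x)
    (hπ_prob : ∫ x, π x = 1)
    (σ : ℝ) (hσ : 0 < σ)
    -- the density of the Gaussian proposal increment `N(0, σ²I_d)`
    (φ : EuclideanSpace ℝ (Fin d) → ℝ)
    (hφ : ∀ z, φ z = (2 * Real.pi * σ ^ 2) ^ (-(d : ℝ) / 2) *
      Real.exp (-‖z‖ ^ 2 / (2 * σ ^ 2)))
    -- the acceptance rate `α(x)`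
    (α : EuclideanSpace ℝ (Fin d) → ℝ)
    (hα : ∀ x, α x = ∫ y, min 1 (π y / π x) * φ (y - x))
    -- the action of the RWM kernel on functions
    (Pf : (EuclideanSpace ℝ (Fin d) → ℝ) → EuclideanSpace ℝ (Fin d) → ℝ)
    (hPf : ∀ f x, Pf f x = (∫ y, f y * (min 1 (π y / π x) * φ (y - x))) +
      (1 - α x) * f x) :
    ∀ f : EuclideanSpace ℝ (Fin d) → ℝ, Measurable f →
      Integrable (fun x => π x * f x ^ 2) →
      0 ≤ ∫ x, π x * f x * Pf f x :=
  rwm_positive_operator_general d π hπ_meas hπ_nonneg σ hσ φ hφ α hα Pf hPf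
end

section
/- Let π be a probability density on ℝ proportional to exp(−U(x)), where U : ℝ → ℝ is continuously differentiable and strictly convex with U(0) = 0 and U′(0) = 0, and Var(π) = 1. Let c > 0, Z ∼ N(0, c), and a(x) = E[min{1, π(x+Z)/π(x)}]. Then for every x with |x| > 1/2, a(x) ≥ φ_c(1/2)/2, where φ_c is the density of N(0, c). -/
/-! Being convex with `U'(0) = 0`, `U` is minimised at `0`, hence does not increase along the
segment from `x` to `0`. When `|x| > 1/2`, every proposal `x + z` with `z` in the interval of
length `1/2` pointing from `x` towards `0` lies on that segment, so it is accepted with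
probability one, while the Gaussian density there is at least `φ_c(1/2)`. -/

open MeasureTheory Set ProbabilityTheory

theorem ConvexOn.le_of_isMinOn_of_mem_segment {𝕜 E β : Type*} [Field 𝕜] [LinearOrder 𝕜]
    [IsStrictOrderedRing 𝕜] [AddCommGroup E] [AddCommGroup β] [LinearOrder β]
    [IsOrderedAddMonoid β] [Module 𝕜 E] [Module 𝕜 β] [IsStrictOrderedModule 𝕜 β]
    {s : Set E} {f : E → β} {m y z : E}
    (hf : ConvexOn 𝕜 s f) (hmin : IsMinOn f s m) (hm : m ∈ s) (hy : y ∈ s)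
    (hz : z ∈ segment 𝕜 m y) : f z ≤ f y :=
  (hf.le_max_of_mem_segment hm hy hz).trans (max_le (hmin hy) le_rfl)

theorem ConvexOn.isMinOn_univ_of_deriv_eq_zero {f : ℝ → ℝ} {m : ℝ} (hf : ConvexOn ℝ univ f)
    (hd : DifferentiableAt ℝ f m) (h0 : deriv f m = 0) : IsMinOn f univ m :=
  hf.isMinOn_of_rightDeriv_eq_zero (by simp) <| by
    rw [hd.hasDerivAt.hasDerivWithinAt.derivWithin (uniqueDiffWithinAt_Ioi m), h0]

theorem gaussianPDFReal_le_of_abs_le (μ : ℝ) (v : NNReal) {x y : ℝ} (h : |y - μ| ≤ |x - μ|) :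
    gaussianPDFReal μ v x ≤ gaussianPDFReal μ v y := by
  simp only [gaussianPDFReal_def]
  gcongr _ * Real.exp (-?_ / _)
  exact sq_le_sq.mpr h

theorem gaussianPDFReal_mul_measureReal_le_integral {w : ℝ → ℝ} {I : Set ℝ} {r : ℝ} (v : NNReal)
    (hw : AEStronglyMeasurable w) (hw_nonneg : ∀ z, 0 ≤ w z) (hw_le_one : ∀ z, w z ≤ 1)
    (hI : MeasurableSet I) (hIr : I ⊆ Icc (-r) r) (hw_eq_one : ∀ z ∈ I, w z = 1) :
    gaussianPDFReal 0 v r * volume.real I ≤ ∫ z, w z * gaussianPDFReal 0 v z := by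
  have hint : Integrable fun z => w z * gaussianPDFReal 0 v z :=
    (integrable_gaussianPDFReal 0 v).bdd_mul hw <| .of_forall fun z => by
      rw [Real.norm_of_nonneg (hw_nonneg z)]; exact hw_le_one z
  calc gaussianPDFReal 0 v r * volume.real I
      ≤ ∫ z in I, w z * gaussianPDFReal 0 v z := by
        refine setIntegral_ge_of_const_le_real hI
          ((measure_mono hIr).trans_lt measure_Icc_lt_top).ne (fun z hz => ?_) hint.integrableOn
        rw [hw_eq_one z hz, one_mul]
        refine gaussianPDFReal_le_of_abs_le 0 v ?_
        rw [sub_zero, sub_zero]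
        exact (abs_le.mpr (hIr hz)).trans (le_abs_self r)
    _ ≤ ∫ z, w z * gaussianPDFReal 0 v z :=
        setIntegral_le_integral hint <| .of_forall fun z =>
          mul_nonneg (hw_nonneg z) (gaussianPDFReal_nonneg 0 v z)

theorem exists_subset_Icc_measureReal_eq_forall_add_mem_uIcc {x r : ℝ} (hr : 0 ≤ r)
    (hrx : r ≤ |x|) : ∃ I : Set ℝ, MeasurableSet I ∧ volume.real I = r ∧ I ⊆ Icc (-r) r ∧
      ∀ z ∈ I, x + z ∈ uIcc 0 x := by
  rcases le_or_gt 0 x with hx | hx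
  · rw [abs_of_nonneg hx] at hrx
    refine ⟨Icc (-r) 0, measurableSet_Icc, by simp [hr], Icc_subset_Icc_right hr, ?_⟩
    intro z hz
    rw [uIcc_of_le hx]
    constructor <;> linarith [hz.1, hz.2]
  · rw [abs_of_neg hx] at hrx
    refine ⟨Icc 0 r, measurableSet_Icc, by simp [hr], Icc_subset_Icc_left (by linarith), ?_⟩
    intro z hz
    rw [uIcc_of_ge hx.le]
    constructor <;> linarith [hz.1, hz.2]

theorem rwm_acceptance_rate_tail_bound_general
    (U : ℝ → ℝ)
    (hU_smooth : ContDiff ℝ 1 U)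
    (hU_conv : StrictConvexOn ℝ Set.univ U)
    (hU'0 : deriv U 0 = 0)
    (hU_int : Integrable (fun x => Real.exp (-U x)))
    (π : ℝ → ℝ)
    (hπ : ∀ x, π x = Real.exp (-U x) / ∫ z, Real.exp (-U z))
    (c : ℝ) (hc : 0 < c)
    -- densities of `N(0,w)`
    (gauss : ℝ → ℝ → ℝ)
    (hgauss : ∀ w z, gauss w z = (Real.sqrt (2 * Real.pi * w))⁻¹ *
      Real.exp (-z ^ 2 / (2 * w)))
    -- the average acceptance rate with Z ∼ N(0, c)
    (a : ℝ → ℝ)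
    (ha : ∀ x, a x = ∫ z, min 1 (π (x + z) / π x) * gauss c z) :
    ∀ x : ℝ, 1 / 2 < |x| → gauss c (1 / 2) / 2 ≤ a x := by
  intro x hx
  have hT : 0 < ∫ z, Real.exp (-U z) := integral_exp_pos hU_int
  have hπ_pos : ∀ y, 0 < π y := fun y => by rw [hπ]; positivity
  have hπ_cont : Continuous π := by
    rw [funext hπ]; exact (hU_smooth.continuous.neg.rexp).div_const _
  have hπ_anti : ∀ y y', U y ≤ U y' → π y' ≤ π y := fun y y' h => by
    rw [hπ, hπ]; gcongr
  have hU_min : IsMinOn U univ 0 :=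
    hU_conv.convexOn.isMinOn_univ_of_deriv_eq_zero (hU_smooth.differentiable one_ne_zero 0) hU'0
  have hgauss_eq : gauss c = gaussianPDFReal 0 c.toNNReal := by
    ext z; simp [hgauss, gaussianPDFReal_def, hc.le]
  obtain ⟨I, hI, hI_vol, hI_sub, hI_seg⟩ :=
    exists_subset_Icc_measureReal_eq_forall_add_mem_uIcc (x := x) (by norm_num) hx.le
  have hw_one : ∀ z ∈ I, min 1 (π (x + z) / π x) = 1 := fun z hz => min_eq_left <| by
    rw [one_le_div (hπ_pos x)]
    refine hπ_anti _ _ (hU_conv.convexOn.le_of_isMinOn_of_mem_segment hU_min trivial trivial ?_)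
    rw [segment_eq_uIcc]
    exact hI_seg z hz
  have h := gaussianPDFReal_mul_measureReal_le_integral c.toNNReal (by fun_prop)
    (fun z => le_min zero_le_one (div_nonneg (hπ_pos _).le (hπ_pos x).le))
    (fun z => min_le_left _ _) hI hI_sub hw_one
  rw [ha, hgauss_eq]
  rwa [hI_vol, ← div_eq_mul_one_div] at h

/-- **Acceptance rate bound away from the mode (Case 2 of Proposition 3.1).**
Let `π ∝ exp(-U)` on `ℝ` with `U` continuously differentiable and strictly convex,
`U(0) = U'(0) = 0`, `Var(π) = 1`.  Let `c > 0` and `Z ∼ N(0, c)`, and set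
`a(x) = E[min{1, π(x+Z)/π(x)}]`.  Then for every `x` with `|x| > 1/2`,
`a(x) ≥ φ_c(1/2)/2`, where `φ_c` is the density of `N(0, c)`. -/
theorem rwm_acceptance_rate_tail_bound
    (U : ℝ → ℝ)
    (hU_smooth : ContDiff ℝ 1 U)
    (hU_conv : StrictConvexOn ℝ Set.univ U)
    (hU0 : U 0 = 0)
    (hU'0 : deriv U 0 = 0)
    (hU_int : Integrable (fun x => Real.exp (-U x)))
    (π : ℝ → ℝ)
    (hπ : ∀ x, π x = Real.exp (-U x) / ∫ z, Real.exp (-U z))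
    -- unit variance
    (hm1 : Integrable (fun x => x * π x))
    (hm2 : Integrable (fun x => x ^ 2 * π x))
    (hvar : (∫ x, x ^ 2 * π x) - (∫ x, x * π x) ^ 2 = 1)
    (c : ℝ) (hc : 0 < c)
    -- densities of `N(0,w)`
    (gauss : ℝ → ℝ → ℝ)
    (hgauss : ∀ w z, gauss w z = (Real.sqrt (2 * Real.pi * w))⁻¹ *
      Real.exp (-z ^ 2 / (2 * w)))
    -- the average acceptance rate with Z ∼ N(0, c)
    (a : ℝ → ℝ)
    (ha : ∀ x, a x = ∫ z, min 1 (π (x + z) / π x) * gauss c z) :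
    ∀ x : ℝ, 1 / 2 < |x| → gauss c (1 / 2) / 2 ≤ a x :=
  rwm_acceptance_rate_tail_bound_general U hU_smooth hU_conv hU'0 hU_int π hπ c hc gauss hgauss a ha
end

section
/- Let π be a probability density on ℝ proportional to exp(−U(x)), where U : ℝ → ℝ is continuously differentiable and strictly convex with U(0) = 0, U′(0) = 0, Var(π) = 1, and U(1) ≤ 2.6. Let c > 0, Z ∼ N(0, c), and a(x) = E[min{1, π(x+Z)/π(x)}]. Define U* = inf{x : U(x) ≤ U(1/2)} and y = max{U*, −1/2}. Then for every x ∈ [y, 1/2], a(x) ≥ φ_c(3/2)·e^{−U(1)}/2 ≥ φ_c(3/2)·e^{−2.6}/2, where φ_c is the density of N(0, c). -/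
/-!
`U` is convex with a critical point at `0`, so it is minimal there: `U ≥ 0`, and on `[0, 1]` it
stays below `U 1`. For `x ∈ [-1/2, 1/2]` and a proposal `z` in the interval `[-x, 1/2 - x]` of
length `1/2`, the point `x + z` lies in `[0, 1/2]` and `|z| ≤ 1`; hence the acceptance ratio
`π(x + z) / π(x) = exp(U x - U(x + z))` is at least `exp(-U 1)` and the Gaussian density at `z`
is at least its value at `3/2`. Integrating this pointwise bound over the interval gives the claim.
-/

open MeasureTheory ProbabilityTheory Set NNReal

lemma ConvexOn.isMinOn_of_deriv_eq_zero {S : Set ℝ} {f : ℝ → ℝ} {x : ℝ}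
    (hf : ConvexOn ℝ S f) (hx : x ∈ interior S) (hd : DifferentiableAt ℝ f x)
    (h : deriv f x = 0) : IsMinOn f S x :=
  hf.isMinOn_of_rightDeriv_eq_zero hx ((hd.derivWithin (uniqueDiffWithinAt_Ioi x)).trans h)

lemma ConvexOn.le_right_of_mem_Icc {S : Set ℝ} {f : ℝ → ℝ} {a b t : ℝ}
    (hf : ConvexOn ℝ S f) (ha : a ∈ S) (hb : b ∈ S) (hab : f a ≤ f b) (ht : t ∈ Icc a b) :
    f t ≤ f b := by
  have hseg : t ∈ segment ℝ a b := by rwa [segment_eq_Icc (ht.1.trans ht.2)]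
  simpa [max_eq_right hab] using hf.le_on_segment ha hb hseg

lemma Real.exp_neg_div_div_exp_neg_div {Z : ℝ} (hZ : Z ≠ 0) (u v : ℝ) :
    Real.exp (-u) / Z / (Real.exp (-v) / Z) = Real.exp (v - u) := by
  rw [div_div_div_cancel_right₀ hZ, ← Real.exp_sub]
  ring_nf

lemma Real.exp_neg_le_min_one_exp_sub {u w M : ℝ} (hu : 0 ≤ u) (hw : w ≤ M) (hM : 0 ≤ M) :
    Real.exp (-M) ≤ min 1 (Real.exp (u - w)) :=
  le_min (Real.exp_le_one_iff.2 (neg_nonpos.2 hM)) (Real.exp_le_exp.2 (by linarith))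

lemma gaussianPDFReal_zero_anti_abs {v : ℝ≥0} {z w : ℝ} (h : |z| ≤ |w|) :
    gaussianPDFReal 0 v w ≤ gaussianPDFReal 0 v z := by
  simp only [gaussianPDFReal, sub_zero]
  gcongr _ * Real.exp (-?_ / _)
  exact sq_le_sq.2 h

lemma mul_sub_le_integral_of_le_on_Icc {f : ℝ → ℝ} {m a b : ℝ} (hf : Integrable f)
    (hf0 : 0 ≤ f) (hab : a ≤ b) (hm : ∀ z ∈ Icc a b, m ≤ f z) :
    m * (b - a) ≤ ∫ z, f z :=
  calc m * (b - a) = m * volume.real (Icc a b) := by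
        rw [Real.volume_real_Icc, max_eq_left (sub_nonneg.2 hab)]
    _ ≤ ∫ z in Icc a b, f z :=
        setIntegral_ge_of_const_le_real measurableSet_Icc measure_Icc_lt_top.ne hm
          hf.integrableOn
    _ ≤ ∫ z, f z := setIntegral_le_integral hf (.of_forall hf0)

theorem gaussianPDFReal_mul_exp_neg_div_two_le_integral {U : ℝ → ℝ} (hU : ConvexOn ℝ univ U)
    (hU_nonneg : ∀ t, 0 ≤ U t) (hU0 : U 0 = 0) (v : ℝ≥0) {x : ℝ}
    (hx : x ∈ Icc (-(1 / 2)) (1 / 2)) :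
    gaussianPDFReal 0 v (3 / 2) * Real.exp (-U 1) / 2 ≤
      ∫ z, min 1 (Real.exp (U x - U (x + z))) * gaussianPDFReal 0 v z := by
  obtain ⟨hx₁, hx₂⟩ := hx
  have hUc : Continuous U := continuousOn_univ.1 (hU.continuousOn isOpen_univ)
  have hU_le : ∀ t ∈ Icc (0 : ℝ) 1, U t ≤ U 1 :=
    fun t => hU.le_right_of_mem_Icc (mem_univ _) (mem_univ _) (by rw [hU0]; exact hU_nonneg 1)
  have hratio_le_one : ∀ z, ‖min 1 (Real.exp (U x - U (x + z)))‖ ≤ 1 := fun z => by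
    rw [Real.norm_of_nonneg (le_min zero_le_one (Real.exp_pos _).le)]
    exact min_le_left _ _
  have hf_int : Integrable fun z => min 1 (Real.exp (U x - U (x + z))) * gaussianPDFReal 0 v z :=
    (integrable_gaussianPDFReal 0 v).bdd_mul (by fun_prop) (.of_forall hratio_le_one)
  have hf_nonneg : 0 ≤ fun z => min 1 (Real.exp (U x - U (x + z))) * gaussianPDFReal 0 v z :=
    fun z => mul_nonneg (le_min zero_le_one (Real.exp_pos _).le) (gaussianPDFReal_nonneg 0 v z)
  have hf_low : ∀ z ∈ Icc (-x) (1 / 2 - x), gaussianPDFReal 0 v (3 / 2) * Real.exp (-U 1) ≤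
      min 1 (Real.exp (U x - U (x + z))) * gaussianPDFReal 0 v z := by
    rintro z ⟨hz₁, hz₂⟩
    have hratio : Real.exp (-U 1) ≤ min 1 (Real.exp (U x - U (x + z))) :=
      Real.exp_neg_le_min_one_exp_sub (hU_nonneg x)
        (hU_le (x + z) ⟨by linarith, by linarith⟩) (hU_nonneg 1)
    have hz : |z| ≤ |3 / 2| := by
      rw [abs_le, abs_of_pos (by norm_num)]
      constructor <;> linarith
    rw [mul_comm]
    exact mul_le_mul hratio (gaussianPDFReal_zero_anti_abs hz) (gaussianPDFReal_nonneg 0 v _)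
      ((Real.exp_pos _).le.trans hratio)
  calc gaussianPDFReal 0 v (3 / 2) * Real.exp (-U 1) / 2
      = gaussianPDFReal 0 v (3 / 2) * Real.exp (-U 1) * (1 / 2 - x - -x) := by ring
    _ ≤ _ := mul_sub_le_integral_of_le_on_Icc hf_int hf_nonneg (by linarith) hf_low

theorem rwm_acceptance_rate_central_bound_general
    (U : ℝ → ℝ)
    (hU_smooth : ContDiff ℝ 1 U)
    (hU_conv : StrictConvexOn ℝ Set.univ U)
    (hU0 : U 0 = 0)
    (hU'0 : deriv U 0 = 0)
    (hU1 : U 1 ≤ 2.6)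
    (hU_int : Integrable (fun x => Real.exp (-U x)))
    (π : ℝ → ℝ)
    (hπ : ∀ x, π x = Real.exp (-U x) / ∫ z, Real.exp (-U z))
    (c : ℝ) (hc : 0 < c)
    -- densities of `N(0,w)`
    (gauss : ℝ → ℝ → ℝ)
    (hgauss : ∀ w z, gauss w z = (Real.sqrt (2 * Real.pi * w))⁻¹ *
      Real.exp (-z ^ 2 / (2 * w)))
    -- the average acceptance rate with Z ∼ N(0, c)
    (a : ℝ → ℝ)
    (ha : ∀ x, a x = ∫ z, min 1 (π (x + z) / π x) * gauss c z)
    -- the left extreme of the 1/2-level set of U, and y = max{U*, −1/2}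
    (Ustar : ℝ)
    (y : ℝ) (hy : y = max Ustar (-(1 / 2))) :
    ∀ x : ℝ, y ≤ x → x ≤ 1 / 2 →
      gauss c (3 / 2) * Real.exp (-U 1) / 2 ≤ a x ∧
      gauss c (3 / 2) * Real.exp (-2.6) / 2 ≤ gauss c (3 / 2) * Real.exp (-U 1) / 2 := by
  intro x hyx hx
  have hx' : -(1 / 2) ≤ x := (le_max_right _ _).trans (hy ▸ hyx)
  have hmin : IsMinOn U univ 0 := hU_conv.convexOn.isMinOn_of_deriv_eq_zero (by simp)
    (hU_smooth.differentiable one_ne_zero 0) hU'0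
  have hU_nonneg : ∀ t, 0 ≤ U t := fun t => hU0 ▸ hmin (mem_univ t)
  have hgauss' : gauss c = gaussianPDFReal 0 c.toNNReal := by
    ext z
    rw [hgauss, gaussianPDFReal, Real.coe_toNNReal c hc.le, sub_zero]
  have hZ : (∫ z, Real.exp (-U z)) ≠ 0 := (integral_exp_pos hU_int).ne'
  refine ⟨?_, ?_⟩
  · simp only [ha, hπ, Real.exp_neg_div_div_exp_neg_div hZ, hgauss']
    exact gaussianPDFReal_mul_exp_neg_div_two_le_integral hU_conv.convexOn hU_nonneg hU0 _
      ⟨hx', hx⟩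
  · rw [hgauss']
    gcongr
    exact gaussianPDFReal_nonneg 0 _ _

/-- **Acceptance rate bound near the mode (Case 1 of Proposition 3.1).**
Let `π ∝ exp(-U)` on `ℝ` with `U` continuously differentiable and strictly convex,
`U(0) = U'(0) = 0`, `Var(π) = 1`, and `U(1) ≤ 2.6`.  Let `c > 0`, `Z ∼ N(0, c)`, and
`a(x) = E[min{1, π(x+Z)/π(x)}]`.  With `U* = inf{x : U(x) ≤ U(1/2)}` and
`y = max{U*, −1/2}`, for every `x ∈ [y, 1/2]` one has
`a(x) ≥ φ_c(3/2)·e^{−U(1)}/2 ≥ φ_c(3/2)·e^{−2.6}/2`. -/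
theorem rwm_acceptance_rate_central_bound
    (U : ℝ → ℝ)
    (hU_smooth : ContDiff ℝ 1 U)
    (hU_conv : StrictConvexOn ℝ Set.univ U)
    (hU0 : U 0 = 0)
    (hU'0 : deriv U 0 = 0)
    (hU1 : U 1 ≤ 2.6)
    (hU_int : Integrable (fun x => Real.exp (-U x)))
    (π : ℝ → ℝ)
    (hπ : ∀ x, π x = Real.exp (-U x) / ∫ z, Real.exp (-U z))
    -- unit variance
    (hm1 : Integrable (fun x => x * π x))
    (hm2 : Integrable (fun x => x ^ 2 * π x))
    (hvar : (∫ x, x ^ 2 * π x) - (∫ x, x * π x) ^ 2 = 1)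
    (c : ℝ) (hc : 0 < c)
    -- densities of `N(0,w)`
    (gauss : ℝ → ℝ → ℝ)
    (hgauss : ∀ w z, gauss w z = (Real.sqrt (2 * Real.pi * w))⁻¹ *
      Real.exp (-z ^ 2 / (2 * w)))
    -- the average acceptance rate with Z ∼ N(0, c)
    (a : ℝ → ℝ)
    (ha : ∀ x, a x = ∫ z, min 1 (π (x + z) / π x) * gauss c z)
    -- the left extreme of the 1/2-level set of U, and y = max{U*, −1/2}
    (Ustar : ℝ) (hUstar : Ustar = sInf {x : ℝ | U x ≤ U (1 / 2)})
    (y : ℝ) (hy : y = max Ustar (-(1 / 2))) :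
    ∀ x : ℝ, y ≤ x → x ≤ 1 / 2 →
      gauss c (3 / 2) * Real.exp (-U 1) / 2 ≤ a x ∧
      gauss c (3 / 2) * Real.exp (-2.6) / 2 ≤ gauss c (3 / 2) * Real.exp (-U 1) / 2 :=
  rwm_acceptance_rate_central_bound_general U hU_smooth hU_conv hU0 hU'0 hU1 hU_int π hπ c hc gauss
    hgauss a ha Ustar y hy
end

section
/- Let U : ℝ → ℝ be continuously differentiable and convex with U(0) = 0, U′(0) = 0, and U(1) > 0, and suppose exp(−U) is integrable; let π(x) = exp(−U(x))/∫_ℝ exp(−U(s)) ds. Then ∫_1^{+∞} x² π(x) dx ≤ h(U(1)), where h(t) = (1/(e^t − 1))·(1 + 2/t + 2/t²). -/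
/-!
Convexity and `U 0 = 0` make `x ↦ U x / x` nondecreasing on `(0, ∞)`, so with `a = U 1`
we get `exp (-U x) ≤ exp (-a * x)` for `x ≥ 1` and `exp (-a * x) ≤ exp (-U x)` on `[0, 1]`.
The first bounds the tail moment by `∫₁^∞ x² e^{-ax} dx = (1/a + 2/a² + 2/a³) e^{-a}`, the
second bounds the normalizing constant below by `∫₀¹ e^{-ax} dx = (1 - e^{-a}) / a`, and the
quotient is `h a`.
-/

open MeasureTheory Set Filter Topology

section

-- `Real` is opened only here: its notation `π` would capture the binder `π` of the theorem.
open Real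

namespace ConvexOn

variable {f : ℝ → ℝ}

theorem le_mul_of_mem_Icc (hf : ConvexOn ℝ (Ici 0) f) (h0 : f 0 = 0) {x : ℝ}
    (hx : x ∈ Icc 0 1) : f x ≤ f 1 * x := by
  rcases hx.1.eq_or_lt with rfl | hx0
  · simp [h0]
  have := hf.secant_mono self_mem_Ici hx0.le (mem_Ici.2 zero_le_one) hx0.ne' one_ne_zero hx.2
  simp only [h0, sub_zero, div_one] at this
  rwa [div_le_iff₀ hx0] at this

theorem mul_le_of_one_le (hf : ConvexOn ℝ (Ici 0) f) (h0 : f 0 = 0) {x : ℝ}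
    (hx : 1 ≤ x) : f 1 * x ≤ f x := by
  have hx0 : 0 < x := zero_lt_one.trans_le hx
  have := hf.secant_mono self_mem_Ici (mem_Ici.2 zero_le_one) hx0.le one_ne_zero hx0.ne' hx
  simp only [h0, sub_zero, div_one] at this
  rwa [le_div_iff₀ hx0] at this

end ConvexOn

theorem integral_exp_neg_mul_zero_one {a : ℝ} (ha : a ≠ 0) :
    ∫ x in (0 : ℝ)..1, exp (-a * x) = (1 - exp (-a)) / a := by
  rw [intervalIntegral.integral_comp_mul_left (fun x => exp x) (neg_ne_zero.2 ha),
    integral_exp, mul_zero, mul_one, exp_zero, smul_eq_mul]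
  field_simp
  ring

theorem div_le_integral_exp_neg {U : ℝ → ℝ} (hU : ConvexOn ℝ (Ici 0) U) (hU0 : U 0 = 0)
    (hU1 : U 1 ≠ 0) (hint : Integrable fun x => exp (-U x)) :
    (1 - exp (-U 1)) / U 1 ≤ ∫ x, exp (-U x) := by
  rw [← integral_exp_neg_mul_zero_one hU1, intervalIntegral.integral_of_le zero_le_one]
  calc ∫ x in Ioc 0 1, exp (-U 1 * x)
      ≤ ∫ x in Ioc 0 1, exp (-U x) := by
        refine setIntegral_mono_on (by fun_prop : Continuous _).integrableOn_Ioc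
          hint.integrableOn measurableSet_Ioc fun x hx => exp_le_exp.2 ?_
        linarith [hU.le_mul_of_mem_Icc hU0 (Ioc_subset_Icc_self hx)]
    _ ≤ ∫ x, exp (-U x) := setIntegral_le_integral hint (.of_forall fun _ => (exp_pos _).le)

theorem hasDerivAt_antideriv_sq_mul_exp_neg_mul {a : ℝ} (ha : a ≠ 0) (x : ℝ) :
    HasDerivAt (fun x => -((x ^ 2 / a + 2 * x / a ^ 2 + 2 / a ^ 3) * exp (-a * x)))
      (x ^ 2 * exp (-a * x)) x := by
  have hpoly : HasDerivAt (fun x : ℝ => x ^ 2 / a + 2 * x / a ^ 2 + 2 / a ^ 3)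
      (2 * x / a + 2 / a ^ 2) x :=
    ((((hasDerivAt_pow 2 x).div_const a).add
      (((hasDerivAt_id' x).const_mul 2).div_const (a ^ 2))).add_const (2 / a ^ 3)).congr_deriv
      (by ring)
  have hexp : HasDerivAt (fun x => exp (-a * x)) (exp (-a * x) * (-a * 1)) x :=
    (hasDerivAt_exp (-a * x)).comp x ((hasDerivAt_id' x).const_mul (-a))
  refine (hpoly.mul hexp).neg.congr_deriv ?_
  field_simp
  ring

theorem tendsto_poly_mul_exp_neg_mul_atTop {a : ℝ} (ha : 0 < a) :
    Tendsto (fun x => (x ^ 2 / a + 2 * x / a ^ 2 + 2 / a ^ 3) * exp (-a * x)) atTop (𝓝 0) := by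
  have hpow (n : ℕ) : Tendsto (fun x : ℝ => x ^ n * exp (-a * x)) atTop (𝓝 0) := by
    simpa [Real.rpow_natCast] using tendsto_rpow_mul_exp_neg_mul_atTop_nhds_zero n a ha
  convert ((hpow 2).div_const a).add (((hpow 1).const_mul 2).div_const (a ^ 2)) |>.add
    ((hpow 0).const_mul (2 / a ^ 3)) using 2 <;> simp; ring

theorem integral_Ioi_sq_mul_exp_neg_mul {a : ℝ} (ha : 0 < a) (c : ℝ) :
    IntegrableOn (fun x => x ^ 2 * exp (-a * x)) (Ioi c) ∧
      ∫ x in Ioi c, x ^ 2 * exp (-a * x) =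
        (c ^ 2 / a + 2 * c / a ^ 2 + 2 / a ^ 3) * exp (-a * c) := by
  have hderiv x (_ : x ∈ Ici c) := hasDerivAt_antideriv_sq_mul_exp_neg_mul ha.ne' x
  have hnonneg x (_ : x ∈ Ioi c) : 0 ≤ x ^ 2 * exp (-a * x) := by positivity
  have hlim := (tendsto_poly_mul_exp_neg_mul_atTop ha).neg
  rw [neg_zero] at hlim
  refine ⟨integrableOn_Ioi_deriv_of_nonneg' hderiv hnonneg hlim, ?_⟩
  rw [integral_Ioi_of_hasDerivAt_of_nonneg' hderiv hnonneg hlim]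
  ring

theorem integral_Ioi_one_sq_mul_exp_neg_le {U : ℝ → ℝ} (hU : ConvexOn ℝ (Ici 0) U)
    (hU0 : U 0 = 0) (hU1 : 0 < U 1) (hmeas : AEStronglyMeasurable fun x => exp (-U x)) :
    ∫ x in Ioi 1, x ^ 2 * exp (-U x) ≤ (1 / U 1 + 2 / U 1 ^ 2 + 2 / U 1 ^ 3) * exp (-U 1) := by
  obtain ⟨hint, hval⟩ := integral_Ioi_sq_mul_exp_neg_mul hU1 1
  have hle x (hx : x ∈ Ioi (1 : ℝ)) : x ^ 2 * exp (-U x) ≤ x ^ 2 * exp (-U 1 * x) := by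
    gcongr
    linarith [hU.mul_le_of_one_le hU0 hx.out.le]
  have hint' : IntegrableOn (fun x => x ^ 2 * exp (-U x)) (Ioi 1) := by
    refine hint.mono' ((continuous_pow 2).aestronglyMeasurable.mul hmeas).restrict ?_
    refine (ae_restrict_iff' measurableSet_Ioi).2 (.of_forall fun x hx => ?_)
    rw [Real.norm_of_nonneg (by positivity)]
    exact hle x hx
  calc ∫ x in Ioi 1, x ^ 2 * exp (-U x) ≤ ∫ x in Ioi 1, x ^ 2 * exp (-U 1 * x) :=
        setIntegral_mono_on hint' hint measurableSet_Ioi hle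
    _ = _ := by simpa using hval

theorem div_one_sub_exp_neg_eq {a : ℝ} (ha : 0 < a) :
    (1 / a + 2 / a ^ 2 + 2 / a ^ 3) * exp (-a) / ((1 - exp (-a)) / a) =
      1 / (exp a - 1) * (1 + 2 / a + 2 / a ^ 2) := by
  have hea : exp a - 1 ≠ 0 := (sub_pos.2 (one_lt_exp_iff.2 ha)).ne'
  rw [exp_neg]
  field_simp

end

theorem tail_second_moment_le_general
    (U : ℝ → ℝ)
    (hU_conv : ConvexOn ℝ Set.univ U)
    (hU0 : U 0 = 0)
    (hU1_pos : 0 < U 1)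
    (hU_int : Integrable (fun x => Real.exp (-U x)))
    (π : ℝ → ℝ)
    (hπ : ∀ x, π x = Real.exp (-U x) / ∫ s, Real.exp (-U s))
    (h : ℝ → ℝ)
    (hh : ∀ t, h t = 1 / (Real.exp t - 1) * (1 + 2 / t + 2 / t ^ 2)) :
    ∫ x in Set.Ioi (1 : ℝ), x ^ 2 * π x ≤ h (U 1) := by
  have hconv : ConvexOn ℝ (Ici 0) U := hU_conv.subset (subset_univ _) (convex_Ici 0)
  have hlower_pos : 0 < (1 - Real.exp (-U 1)) / U 1 :=
    div_pos (sub_pos.2 (Real.exp_lt_one_iff.2 (neg_neg_of_pos hU1_pos))) hU1_pos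
  calc ∫ x in Ioi 1, x ^ 2 * π x
      = (∫ x in Ioi 1, x ^ 2 * Real.exp (-U x)) / ∫ s, Real.exp (-U s) := by
        simp_rw [hπ, ← mul_div_assoc]
        exact integral_div _ _
    _ ≤ (1 / U 1 + 2 / U 1 ^ 2 + 2 / U 1 ^ 3) * Real.exp (-U 1) / ((1 - Real.exp (-U 1)) / U 1) :=
        div_le_div₀ (by positivity)
          (integral_Ioi_one_sq_mul_exp_neg_le hconv hU0 hU1_pos hU_int.aestronglyMeasurable)
          hlower_pos (div_le_integral_exp_neg hconv hU0 hU1_pos.ne' hU_int)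
    _ = h (U 1) := by rw [hh, div_one_sub_exp_neg_eq hU1_pos]

/-- **Tail second-moment bound (second estimate in Lemma 3.2).**
Let `U : ℝ → ℝ` be continuously differentiable and convex with `U(0) = U'(0) = 0`
and `U(1) > 0`, with `exp(-U)` integrable, and let `π(x) = exp(-U(x)) / ∫ exp(-U)`.
Then `∫_1^∞ x² π(x) dx ≤ h(U(1))`, where `h(t) = (1/(eᵗ − 1))·(1 + 2/t + 2/t²)`. -/
theorem tail_second_moment_le
    (U : ℝ → ℝ)
    (hU_smooth : ContDiff ℝ 1 U)
    (hU_conv : ConvexOn ℝ Set.univ U)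
    (hU0 : U 0 = 0)
    (hU'0 : deriv U 0 = 0)
    (hU1_pos : 0 < U 1)
    (hU_int : Integrable (fun x => Real.exp (-U x)))
    (π : ℝ → ℝ)
    (hπ : ∀ x, π x = Real.exp (-U x) / ∫ s, Real.exp (-U s))
    (h : ℝ → ℝ)
    (hh : ∀ t, h t = 1 / (Real.exp t - 1) * (1 + 2 / t + 2 / t ^ 2)) :
    ∫ x in Set.Ioi (1 : ℝ), x ^ 2 * π x ≤ h (U 1) :=
  tail_second_moment_le_general U hU_conv hU0 hU1_pos hU_int π hπ h hh
end
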